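/- arXiv:1307.0184 — 9 statements merged into one kernel-verified Lean document; each statement's English description precedes it below -/
import Mathlib

section
/- Every Polish space that is strongly locally homogeneous is countable dense homogeneous. That is, if X is a separable completely metrizable space and there exists a base B for the topology of X such that for every U ∈ B and all x, y ∈ U there is a homeomorphism h of X with h(x) = y and h equal to the identity on X \ U, then for every pair (A, B) of countable dense subsets of X there exists a homeomorphism h of X such that h[A] = B. -/
/-- A space is countable dense homogeneous (CDH) if for every pair of countable
dense subsets there is a homeomorphism mapping one onto the other. -/
def CDH (X : Type*) [TopologicalSpace X] : Prop :=
  ∀ A B : Set X, A.Countable → Dense A → B.Countable → Dense B →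
    ∃ h : X ≃ₜ X, h '' A = B

/-!
Back and forth. A stage is a homeomorphism `h` together with finitely many points of `A` that
`h` already sends into `B`. A new point `a ∈ A` is matched by composing `h` with a homeomorphism
supported in a small basic open set around `h a` that avoids the matched points and moves `h a`
onto a point of the dense set `B`; a new point of `B` is matched in the same way through `h⁻¹`.
If the `n`-th correction moves both `h` and `h⁻¹` by at most `2⁻ⁿ`, completeness makes both
sequences converge uniformly, to continuous maps inverse to each other. The limit homeomorphism
agrees with every stage on its matched points, so it maps `A` onto `B`.
-/

open Set Filter Topology Metric TopologicalSpace Function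

section UniformLimit

variable {ι X : Type*} [UniformSpace X] [T2Space X] {p : Filter ι} [p.NeBot]
  {u : ι → X ≃ₜ X} {F G : X → X}

theorem leftInverse_of_tendstoUniformly (hF : TendstoUniformly (fun n => ⇑(u n)) F p)
    (hG : TendstoUniformly (fun n => ⇑(u n).symm) G p) : LeftInverse G F := fun x =>
  -- pass to the limit in `(u n).symm (u n x) = x`, which uniform convergence of `(u n).symm` allows
  tendsto_nhds_unique
    (hG.tendsto_comp (hG.continuous (.of_forall fun n => (u n).symm.continuous)).continuousAt
      (hF.tendsto_at x))
    (tendsto_const_nhds.congr fun n => ((u n).symm_apply_apply x).symm)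

def Homeomorph.ofTendstoUniformly (hF : TendstoUniformly (fun n => ⇑(u n)) F p)
    (hG : TendstoUniformly (fun n => ⇑(u n).symm) G p) : X ≃ₜ X where
  toFun := F
  invFun := G
  left_inv := leftInverse_of_tendstoUniformly hF hG
  right_inv := leftInverse_of_tendstoUniformly (u := fun n => (u n).symm) hG hF
  continuous_toFun := hF.continuous (.of_forall fun n => (u n).continuous)
  continuous_invFun := hG.continuous (.of_forall fun n => (u n).symm.continuous)

end UniformLimit

theorem exists_tendstoUniformly_of_dist_le_summable {α Y : Type*} [PseudoMetricSpace Y]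
    [CompleteSpace Y] {f : ℕ → α → Y} {d : ℕ → ℝ} (hd : Summable d)
    (hf : ∀ n x, dist (f n x) (f (n + 1) x) ≤ d n) : ∃ F, TendstoUniformly f F atTop := by
  choose F hF using fun x =>
    cauchySeq_tendsto_of_complete (cauchySeq_of_dist_le_of_summable d (hf · x) hd)
  refine ⟨F, Metric.tendstoUniformly_iff.2 fun ε hε => ?_⟩
  have htail : Tendsto (fun n => ∑' m, d (n + m)) atTop (𝓝 0) := by
    simpa only [add_comm] using tendsto_sum_nat_add d
  filter_upwards [htail.eventually (gt_mem_nhds hε)] with n hn x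
  rw [dist_comm]
  exact (dist_le_tsum_of_dist_le_of_tendsto d (hf · x) hd (hF x) n).trans_lt hn

theorem dist_apply_perm_le {α Y : Type*} [PseudoMetricSpace Y] {e : Equiv.Perm α} {U : Set α}
    (he : ∀ z ∉ U, e z = z) {φ : α → Y} {c : Y} {r : ℝ} (hr : 0 ≤ r)
    (hφ : MapsTo φ U (closedBall c r)) (z : α) : dist (φ z) (φ (e z)) ≤ 2 * r := by
  by_cases hz : z ∈ U
  · have hez : e z ∈ U := by
      by_contra hez
      have hfix : e z = z := e.injective (he _ hez)
      exact hez (by rwa [hfix])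
    calc dist (φ z) (φ (e z)) ≤ dist (φ z) c + dist (φ (e z)) c := dist_triangle_right _ _ _
      _ ≤ r + r := add_le_add (hφ hz) (hφ hez)
      _ = 2 * r := (two_mul r).symm
  · rw [he z hz, dist_self]
    positivity

def IsSLHBasis {X : Type*} [TopologicalSpace X] (𝒰 : Set (Set X)) : Prop :=
  IsTopologicalBasis 𝒰 ∧ ∀ U ∈ 𝒰, ∀ x ∈ U, ∀ y ∈ U, ∃ h : X ≃ₜ X, h x = y ∧ ∀ z ∉ U, h z = z

section BiDistLE

variable {X : Type*} [PseudoMetricSpace X]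

def BiDistLE (h h' : X ≃ₜ X) (ε : ℝ) : Prop :=
  (∀ x, dist (h x) (h' x) ≤ ε) ∧ ∀ y, dist (h.symm y) (h'.symm y) ≤ ε

theorem biDistLE_refl (h : X ≃ₜ X) {ε : ℝ} (hε : 0 ≤ ε) : BiDistLE h h ε :=
  ⟨fun _ => (dist_self _).trans_le hε, fun _ => (dist_self _).trans_le hε⟩

theorem BiDistLE.trans {h h' h'' : X ≃ₜ X} {ε δ : ℝ} (h₁ : BiDistLE h h' ε)
    (h₂ : BiDistLE h' h'' δ) : BiDistLE h h'' (ε + δ) :=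
  ⟨fun x => (dist_triangle _ _ _).trans (add_le_add (h₁.1 x) (h₂.1 x)),
    fun y => (dist_triangle _ _ _).trans (add_le_add (h₁.2 y) (h₂.2 y))⟩

theorem biDistLE_symm_iff {h h' : X ≃ₜ X} {ε : ℝ} :
    BiDistLE h.symm h'.symm ε ↔ BiDistLE h h' ε :=
  And.comm

end BiDistLE

structure FiniteMatching {X : Type*} [TopologicalSpace X] (A B : Set X) where
  toHomeomorph : X ≃ₜ X
  dom : Set X
  finite_dom : dom.Finite
  dom_subset : dom ⊆ A
  mapsTo_dom : MapsTo toHomeomorph dom B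

instance {X : Type*} [TopologicalSpace X] {A B : Set X} : Preorder (FiniteMatching A B) where
  le s t := s.dom ⊆ t.dom ∧ EqOn t.toHomeomorph s.toHomeomorph s.dom
  le_refl s := ⟨subset_rfl, eqOn_refl _ _⟩
  le_trans _ _ _ hst htu := ⟨hst.1.trans htu.1, (htu.2.mono hst.1).trans hst.2⟩

section BackAndForth

variable {X : Type*} [MetricSpace X] {𝒰 : Set (Set X)} {A B Q : Set X} {ε : ℝ}

theorem IsSLHBasis.exists_eqOn_mapsTo_insert (h𝒰 : IsSLHBasis 𝒰) (hB : Dense B) (h : X ≃ₜ X)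
    (hQ : Q.Finite) (hQB : MapsTo h Q B) (a : X) (hε : 0 < ε) :
    ∃ h' : X ≃ₜ X, EqOn h' h Q ∧ MapsTo h' (insert a Q) B ∧ BiDistLE h h' ε := by
  by_cases haQ : a ∈ Q
  · exact ⟨h, eqOn_refl _ _, by rwa [insert_eq_of_mem haQ], biDistLE_refl h hε.le⟩
  -- `g` will be supported in `U ⊆ W`: it fixes the matched points `h '' Q`, and it moves `h`
  -- and `h⁻¹` by at most `ε` because `U` and `h⁻¹ U` lie in balls of radius `ε / 2`.
  set W := ball (h a) (ε / 2) ∩ h.symm ⁻¹' ball a (ε / 2) ∩ (h '' Q)ᶜ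
  have hW : IsOpen W := ((isOpen_ball.inter (isOpen_ball.preimage h.symm.continuous)).inter
    (hQ.image h).isClosed.isOpen_compl)
  have haW : h a ∈ W :=
    ⟨⟨mem_ball_self (half_pos hε), by simpa using mem_ball_self (x := a) (half_pos hε)⟩,
      h.injective.mem_set_image.not.2 haQ⟩
  obtain ⟨U, hU, haU, hUW⟩ := h𝒰.1.exists_subset_of_mem_open haW hW
  obtain ⟨b, hbB, hbU⟩ := hB.exists_mem_open (h𝒰.1.isOpen hU) ⟨_, haU⟩
  obtain ⟨g, hgb, hg⟩ := h𝒰.2 U hU _ haU b hbU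
  have hg' : ∀ z ∉ U, g.symm z = z := fun z hz => g.symm_apply_eq.2 (hg z hz).symm
  have hφ : ∀ (φ : X → X) (c : X),
      MapsTo φ W (ball c (ε / 2)) → MapsTo φ U (closedBall c (ε / 2)) :=
    fun φ c hφ => (hφ.mono_left hUW).mono_right ball_subset_closedBall
  refine ⟨h.trans g, fun q hq => hg _ fun hqU => (hUW hqU).2 (mem_image_of_mem h hq), ?_, ?_⟩
  · rintro x (rfl | hx)
    · simpa [hgb] using hbB
    · simpa [hg _ fun hxU => (hUW hxU).2 (mem_image_of_mem h hx)] using hQB hx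
  constructor
  · intro x
    simpa [mul_div_cancel₀] using dist_apply_perm_le (e := g.toEquiv) hg (half_pos hε).le
      (hφ id (h a) fun z hz => hz.1.1) (h x)
  · intro y
    simpa [mul_div_cancel₀] using dist_apply_perm_le (e := g.symm.toEquiv) hg' (half_pos hε).le
      (hφ h.symm a fun z hz => hz.1.2) y

theorem IsSLHBasis.exists_eqOn_apply_eq (h𝒰 : IsSLHBasis 𝒰) (hA : Dense A) (h : X ≃ₜ X)
    (hQ : Q.Finite) (hQA : Q ⊆ A) (b : X) (hε : 0 < ε) :
    ∃ h' : X ≃ₜ X, ∃ a ∈ A, h' a = b ∧ EqOn h' h Q ∧ BiDistLE h h' ε := by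
  -- the forward step for `h⁻¹`, with the roles of `A` and `B` exchanged
  have hmaps : MapsTo h.symm (h '' Q) A := by
    rintro _ ⟨q, hq, rfl⟩
    simpa using hQA hq
  obtain ⟨k, hkh, hkA, hk⟩ :=
    h𝒰.exists_eqOn_mapsTo_insert hA h.symm (hQ.image h) hmaps b hε
  refine ⟨k.symm, k b, hkA (mem_insert b _), k.symm_apply_apply b, fun q hq => ?_,
    biDistLE_symm_iff.1 hk⟩
  rw [k.symm_apply_eq, hkh (mem_image_of_mem h hq), h.symm_apply_apply]

namespace FiniteMatching

theorem exists_le_extend (h𝒰 : IsSLHBasis 𝒰) (hAd : Dense A) (hBd : Dense B)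
    (s : FiniteMatching A B) {a b : X} (ha : a ∈ A) (hb : b ∈ B) (hε : 0 < ε) :
    ∃ t : FiniteMatching A B, s ≤ t ∧ a ∈ t.dom ∧ b ∈ t.toHomeomorph '' t.dom ∧
      BiDistLE s.toHomeomorph t.toHomeomorph ε := by
  obtain ⟨h₁, hh₁, hB₁, hd₁⟩ := h𝒰.exists_eqOn_mapsTo_insert hBd s.toHomeomorph s.finite_dom
    s.mapsTo_dom a (half_pos hε)
  obtain ⟨h₂, a', ha', hh₂a', hh₂, hd₂⟩ := h𝒰.exists_eqOn_apply_eq hAd h₁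
    (s.finite_dom.insert a) (insert_subset ha s.dom_subset) b (half_pos hε)
  refine ⟨⟨h₂, insert a' (insert a s.dom), (s.finite_dom.insert a).insert a',
    insert_subset ha' (insert_subset ha s.dom_subset), ?_⟩, ⟨?_, ?_⟩, ?_, ?_, ?_⟩
  · rintro x (rfl | hx)
    · simpa [hh₂a'] using hb
    · simpa [hh₂ hx] using hB₁ hx
  · exact (subset_insert a s.dom).trans (subset_insert a' _)
  · exact (hh₂.mono (subset_insert a s.dom)).trans hh₁
  · exact mem_insert_of_mem a' (mem_insert a s.dom)
  · exact ⟨a', mem_insert a' _, hh₂a'⟩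
  · simpa using hd₁.trans hd₂

theorem exists_seq (h𝒰 : IsSLHBasis 𝒰) (hAd : Dense A) (hBd : Dense B) {f e : ℕ → X}
    (hf : ∀ n, f n ∈ A) (he : ∀ n, e n ∈ B) :
    ∃ s : ℕ → FiniteMatching A B, Monotone s ∧ (∀ n, f n ∈ (s (n + 1)).dom) ∧
      (∀ n, e n ∈ (s (n + 1)).toHomeomorph '' (s (n + 1)).dom) ∧
      ∀ n, BiDistLE (s n).toHomeomorph (s (n + 1)).toHomeomorph ((1 / 2) ^ n) := by
  choose next hle hf' he' hd using fun n (s : FiniteMatching A B) =>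
    s.exists_le_extend h𝒰 hAd hBd (hf n) (he n) (pow_pos (one_half_pos (α := ℝ)) n)
  let s₀ : FiniteMatching A B :=
    ⟨Homeomorph.refl X, ∅, finite_empty, empty_subset A, mapsTo_empty _ B⟩
  let s : ℕ → FiniteMatching A B := fun n => Nat.rec s₀ next n
  exact ⟨s, monotone_nat_of_le_succ fun n => hle n (s n), fun n => hf' n (s n),
    fun n => he' n (s n), fun n => hd n (s n)⟩

theorem exists_homeomorph_image_eq [CompleteSpace X] {s : ℕ → FiniteMatching A B}
    (hs : Monotone s)
    (hd : ∀ n, BiDistLE (s n).toHomeomorph (s (n + 1)).toHomeomorph ((1 / 2) ^ n))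
    (hA : A ⊆ ⋃ n, (s n).dom) (hB : B ⊆ ⋃ n, (s n).toHomeomorph '' (s n).dom) :
    ∃ H : X ≃ₜ X, H '' A = B := by
  obtain ⟨F, hF⟩ := exists_tendstoUniformly_of_dist_le_summable summable_geometric_two
    fun n x => (hd n).1 x
  obtain ⟨G, hG⟩ := exists_tendstoUniformly_of_dist_le_summable summable_geometric_two
    fun n y => (hd n).2 y
  let H := Homeomorph.ofTendstoUniformly hF hG
  have hH : ∀ n, EqOn H (s n).toHomeomorph (s n).dom := fun n x hx =>
    tendsto_nhds_unique (hF.tendsto_at x) <| tendsto_const_nhds.congr' <|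
      (eventually_ge_atTop n).mono fun m hm => ((hs hm).2 hx).symm
  refine ⟨H, (image_subset_iff.2 fun a ha => ?_).antisymm fun b hb => ?_⟩
  · obtain ⟨n, hn⟩ := mem_iUnion.1 (hA ha)
    rw [mem_preimage, hH n hn]
    exact (s n).mapsTo_dom hn
  · obtain ⟨n, a, ha, rfl⟩ := mem_iUnion.1 (hB hb)
    exact ⟨a, (s n).dom_subset ha, hH n ha⟩

end FiniteMatching

theorem IsSLHBasis.exists_homeomorph_image_eq [CompleteSpace X] [Nonempty X]
    (h𝒰 : IsSLHBasis 𝒰) (hAc : A.Countable) (hAd : Dense A) (hBc : B.Countable)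
    (hBd : Dense B) : ∃ H : X ≃ₜ X, H '' A = B := by
  obtain ⟨f, rfl⟩ := hAc.exists_eq_range hAd.nonempty
  obtain ⟨e, rfl⟩ := hBc.exists_eq_range hBd.nonempty
  obtain ⟨s, hs, hf, he, hd⟩ :=
    FiniteMatching.exists_seq h𝒰 hAd hBd (mem_range_self (f := f)) (mem_range_self (f := e))
  refine FiniteMatching.exists_homeomorph_image_eq hs hd ?_ ?_
  · exact range_subset_iff.2 fun n => mem_iUnion.2 ⟨n + 1, hf n⟩
  · exact range_subset_iff.2 fun n => mem_iUnion.2 ⟨n + 1, he n⟩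

end BackAndForth

/-- Anderson–Curtis–van Mill: every Polish strongly locally homogeneous space is CDH. -/
theorem polish_slh_implies_cdh (X : Type*) [TopologicalSpace X] [PolishSpace X]
    (B : Set (Set X)) (hB : TopologicalSpace.IsTopologicalBasis B)
    (hSLH : ∀ U ∈ B, ∀ x ∈ U, ∀ y ∈ U,
      ∃ h : X ≃ₜ X, h x = y ∧ ∀ z ∉ U, h z = z) :
    CDH X := by
  intro S T hSc hSd hTc hTd
  rcases isEmpty_or_nonempty X with hX | hX
  · exact ⟨Homeomorph.refl X, by simp [eq_empty_of_isEmpty]⟩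
  let := upgradeIsCompletelyMetrizable X
  exact IsSLHBasis.exists_homeomorph_image_eq ⟨hB, hSLH⟩ hSc hSd hTc hTd
end

section
/- (Lavrentiev) Let Z be a Polish space, let S ⊆ Z, and let f : S → S be a homeomorphism of the subspace S onto itself. Then there exist a Gδ subset T of Z with S ⊆ T and a homeomorphism g : T → T of the subspace T onto itself such that g(s) = f(s) for every s ∈ S. -/
/-!
By Kuratowski's theorem, a map continuous on a subset `S` of a metrizable space, with values in a
complete metric space, extends continuously to the Gδ set of points of `closure S` at which its
oscillation along `S` vanishes. Extending `f` and `f⁻¹` in this way and keeping the points where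
the two extensions are mutually inverse gives Lavrentiev's Gδ partial homeomorphism `G → H`
extending `f`. To make source and target agree, shrink `G ∩ H` to its largest subset invariant
under both extensions: the intersection of a decreasing sequence of Gδ sets, each cut out of the
previous one by preimages under maps continuous on it.
-/

open Set Filter Topology TopologicalSpace Metric ENNReal

section GDelta

variable {X Y : Type*} [TopologicalSpace X] [TopologicalSpace Y]

theorem IsGδ.image_val {s : Set X} (hs : IsGδ s) {t : Set s} (ht : IsGδ t) :
    IsGδ (((↑) : s → X) '' t) := by
  obtain ⟨u, hu, rfl⟩ := ht.eq_iInter_nat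
  choose v hv hvu using fun n => isOpen_induced_iff.1 (hu n)
  rw [← iInter_congr hvu, ← preimage_iInter, Subtype.image_preimage_coe]
  exact hs.inter (.iInter_of_isOpen hv)

theorem IsGδ.inter_preimage {s : Set X} (hs : IsGδ s) {f : X → Y} (hf : ContinuousOn f s)
    {t : Set Y} (ht : IsGδ t) : IsGδ (s ∩ f ⁻¹' t) := by
  rw [← Subtype.image_preimage_coe]
  exact hs.image_val (ht.preimage (f := s.domRestrict f) hf.domRestrict)

theorem IsGδ.inter_setOf_eq [PseudoMetrizableSpace X] [T2Space Y] {s : Set X} (hs : IsGδ s)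
    {f g : X → Y} (hf : ContinuousOn f s) (hg : ContinuousOn g s) :
    IsGδ (s ∩ {x | f x = g x}) := by
  rw [← Subtype.image_preimage_coe]
  exact hs.image_val (isClosed_eq hf.domRestrict hg.domRestrict).isGδ

end GDelta

section Oscillation

variable {X Y : Type*} [TopologicalSpace X] [PseudoEMetricSpace Y]

theorem isOpen_setOf_oscillationWithin_lt (f : X → Y) (S : Set X) (ε : ℝ≥0∞) :
    IsOpen {x | oscillationWithin f S x < ε} := by
  refine isOpen_iff_mem_nhds.2 fun x hx => ?_
  obtain ⟨t, ht, htε⟩ := by simpa only [oscillationWithin, iInf_lt_iff, exists_prop] using hx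
  obtain ⟨U, hU, hxU, hUS⟩ := mem_nhdsWithin.1 (mem_map.1 ht)
  filter_upwards [hU.mem_nhds hxU] with y hy
  exact (biInf_le ediam (mem_map.2 (mem_nhdsWithin.2 ⟨U, hU, hy, hUS⟩))).trans_lt htε

theorem isGδ_setOf_oscillationWithin_eq_zero (f : X → Y) (S : Set X) :
    IsGδ {x | oscillationWithin f S x = 0} := by
  have h : {x | oscillationWithin f S x = 0} =
      ⋂ n : ℕ, {x | oscillationWithin f S x < (n : ℝ≥0∞)⁻¹} := by
    ext x
    simp only [mem_iInter, mem_ofPred_eq]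
    refine ⟨fun h n => h ▸ ENNReal.inv_pos.2 (natCast_ne_top n), fun h => ?_⟩
    by_contra h0
    obtain ⟨n, hn⟩ := ENNReal.exists_inv_nat_lt h0
    exact (h n).not_gt hn
  rw [h]
  exact .iInter_of_isOpen fun n => isOpen_setOf_oscillationWithin_lt f S _

theorem exists_tendsto_of_oscillationWithin_eq_zero [CompleteSpace Y] {f : X → Y} {S : Set X}
    {x : X} (hx : x ∈ closure S) (h : oscillationWithin f S x = 0) :
    ∃ y, Tendsto f (𝓝[S] x) (𝓝 y) := by
  have := mem_closure_iff_nhdsWithin_neBot.1 hx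
  refine CompleteSpace.complete (EMetric.cauchy_iff.2 ⟨map_neBot.ne', fun ε hε => ?_⟩)
  obtain ⟨t, ht, htε⟩ := by
    simpa only [oscillationWithin, iInf_lt_iff, exists_prop] using h.trans_lt hε
  exact ⟨t, ht, fun a ha b hb => (edist_le_ediam_of_mem ha hb).trans_lt htε⟩

end Oscillation

theorem ContinuousOn.exists_isGδ_extension {X Y : Type*} [TopologicalSpace X]
    [PseudoMetrizableSpace X] [EMetricSpace Y] [CompleteSpace Y] {f : X → Y} {S : Set X}
    (hf : ContinuousOn f S) : ∃ G F, IsGδ G ∧ S ⊆ G ∧ ContinuousOn F G ∧ EqOn F f S :=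
  ⟨closure S ∩ {x | oscillationWithin f S x = 0}, extendFrom S f,
    isClosed_closure.isGδ.inter (isGδ_setOf_oscillationWithin_eq_zero f S),
    fun x hx => ⟨subset_closure hx, (hf x hx).oscillationWithin_eq_zero⟩,
    continuousOn_extendFrom (fun _ hx => hx.1) fun _ hx =>
      exists_tendsto_of_oscillationWithin_eq_zero hx.1 hx.2,
    extendFrom_extends hf⟩

section InvariantCore

variable {α : Type*} (f g : α → α) (A : Set α)

def invariantStage : ℕ → Set α
  | 0 => A
  | n + 1 => invariantStage n ∩ f ⁻¹' invariantStage n ∩ g ⁻¹' invariantStage n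

def invariantCore : Set α := ⋂ n, invariantStage f g A n

variable {f g A}

theorem invariantStage_subset (n : ℕ) : invariantStage f g A n ⊆ A := by
  induction n with
  | zero => exact subset_rfl
  | succ n ih => exact fun x hx => ih hx.1.1

theorem invariantCore_subset : invariantCore f g A ⊆ A :=
  iInter_subset_of_subset 0 subset_rfl

theorem mapsTo_invariantCore_left : MapsTo f (invariantCore f g A) (invariantCore f g A) :=
  fun _ hx => mem_iInter.2 fun n => (mem_iInter.1 hx (n + 1)).1.2

theorem mapsTo_invariantCore_right : MapsTo g (invariantCore f g A) (invariantCore f g A) :=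
  fun _ hx => mem_iInter.2 fun n => (mem_iInter.1 hx (n + 1)).2

theorem subset_invariantCore {S : Set α} (hSA : S ⊆ A) (hf : MapsTo f S S) (hg : MapsTo g S S) :
    S ⊆ invariantCore f g A := by
  refine subset_iInter fun n => ?_
  induction n with
  | zero => exact hSA
  | succ n ih => exact fun x hx => ⟨⟨ih hx, ih (hf hx)⟩, ih (hg hx)⟩

theorem IsGδ.invariantCore [TopologicalSpace α] (hA : IsGδ A) (hf : ContinuousOn f A)
    (hg : ContinuousOn g A) : IsGδ (invariantCore f g A) := by
  refine .iInter fun n => ?_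
  induction n with
  | zero => exact hA
  | succ n ih =>
    exact (ih.inter_preimage (hf.mono (invariantStage_subset n)) ih).inter_preimage
      (hg.mono (inter_subset_left.trans (invariantStage_subset n))) ih

end InvariantCore

section LavrentievDomain

variable {X Y : Type*} {G : Set X} {H : Set Y} {φ : X → Y} {ψ : Y → X}

variable (G H φ ψ) in
def lavrentievDomain : Set X := G ∩ φ ⁻¹' H ∩ {x | ψ (φ x) = x}

theorem lavrentievDomain_subset : lavrentievDomain G H φ ψ ⊆ G :=
  fun _ hx => hx.1.1

theorem leftInvOn_lavrentievDomain : LeftInvOn ψ φ (lavrentievDomain G H φ ψ) :=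
  fun _ hx => hx.2

theorem mapsTo_lavrentievDomain :
    MapsTo φ (lavrentievDomain G H φ ψ) (lavrentievDomain H G ψ φ) := by
  rintro x ⟨⟨hxG, hφx⟩, hψφx : ψ (φ x) = x⟩
  refine ⟨⟨hφx, ?_⟩, ?_⟩
  · rw [mem_preimage, hψφx]
    exact hxG
  · change φ (ψ (φ x)) = φ x
    rw [hψφx]

theorem subset_lavrentievDomain {s : Set X} (hsG : s ⊆ G) (hφ : MapsTo φ s H)
    (hψ : LeftInvOn ψ φ s) : s ⊆ lavrentievDomain G H φ ψ :=
  fun _ hx => ⟨⟨hsG hx, hφ hx⟩, hψ hx⟩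

theorem IsGδ.lavrentievDomain [TopologicalSpace X] [PseudoMetrizableSpace X] [T2Space X]
    [TopologicalSpace Y] (hG : IsGδ G) (hH : IsGδ H) (hφ : ContinuousOn φ G)
    (hψ : ContinuousOn ψ H) : IsGδ (lavrentievDomain G H φ ψ) :=
  (hG.inter_preimage hφ hH).inter_setOf_eq
    (hψ.comp (hφ.mono inter_subset_left) fun _ hx => hx.2) continuousOn_id

end LavrentievDomain

namespace PartialHomeomorph

variable {X Y : Type*} [TopologicalSpace X] [IsCompletelyMetrizableSpace X]
  [TopologicalSpace Y] [IsCompletelyMetrizableSpace Y]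

theorem exists_isGδ_extension (e : PartialHomeomorph X Y) :
    ∃ e' : PartialHomeomorph X Y, IsGδ e'.source ∧ IsGδ e'.target ∧
      e.source ⊆ e'.source ∧ e.target ⊆ e'.target ∧ EqOn e' e e.source ∧
      EqOn e'.symm e.symm e.target := by
  let := upgradeIsCompletelyMetrizable X
  let := upgradeIsCompletelyMetrizable Y
  obtain ⟨G, Φ, hG, hsG, hΦ, hΦe⟩ := e.continuousOn.exists_isGδ_extension
  obtain ⟨H, Ψ, hH, htH, hΨ, hΨe⟩ := e.continuousOn_symm.exists_isGδ_extension
  have hΨΦ : LeftInvOn Ψ Φ e.source :=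
    (e.leftInvOn.congr_left e.mapsTo hΨe.symm).congr_right hΦe.symm
  have hΦΨ : LeftInvOn Φ Ψ e.target :=
    (LeftInvOn.congr_left e.rightInvOn e.mapsTo_symm hΦe.symm).congr_right hΨe.symm
  refine ⟨{ toFun := Φ, invFun := Ψ
            source := lavrentievDomain G H Φ Ψ, target := lavrentievDomain H G Ψ Φ
            map_source' := mapsTo_lavrentievDomain, map_target' := mapsTo_lavrentievDomain
            left_inv' := leftInvOn_lavrentievDomain, right_inv' := leftInvOn_lavrentievDomain
            continuousOn_toFun := hΦ.mono lavrentievDomain_subset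
            continuousOn_invFun := hΨ.mono lavrentievDomain_subset },
    hG.lavrentievDomain hH hΦ hΨ, hH.lavrentievDomain hG hΨ hΦ,
    subset_lavrentievDomain hsG ((e.mapsTo.congr hΦe.symm).mono_right htH) hΨΦ,
    subset_lavrentievDomain htH ((e.mapsTo_symm.congr hΨe.symm).mono_right hsG) hΦΨ,
    hΦe, hΨe⟩

theorem exists_isGδ_extension_of_target_eq_source (e : PartialHomeomorph X X)
    (he : e.target = e.source) :
    ∃ e' : PartialHomeomorph X X, IsGδ e'.source ∧ e'.target = e'.source ∧
      e.source ⊆ e'.source ∧ EqOn e' e e.source := by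
  obtain ⟨e', hG, hH, hs, ht, heq, heq_symm⟩ := e.exists_isGδ_extension
  set T := invariantCore e' e'.symm (e'.source ∩ e'.target)
  have hT : T ⊆ e'.source ∩ e'.target := invariantCore_subset
  have hsT : e.source ⊆ T := by
    refine subset_invariantCore (subset_inter hs (he ▸ ht)) ?_ ?_
    · simpa only [he] using e.mapsTo.congr heq.symm
    · simpa only [he] using e.mapsTo_symm.congr heq_symm.symm
  refine ⟨{ toFun := e', invFun := e'.symm, source := T, target := T
            map_source' := mapsTo_invariantCore_left
            map_target' := mapsTo_invariantCore_right
            left_inv' := fun _ hx => e'.left_inv (hT hx).1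
            right_inv' := fun _ hx => e'.right_inv (hT hx).2
            continuousOn_toFun := e'.continuousOn.mono fun _ hx => (hT hx).1
            continuousOn_invFun := e'.continuousOn_symm.mono fun _ hx => (hT hx).2 },
    (hG.inter hH).invariantCore (e'.continuousOn.mono inter_subset_left)
      (e'.continuousOn_symm.mono inter_subset_right), rfl, hsT, heq⟩

end PartialHomeomorph

open Classical in
noncomputable def Homeomorph.subtypeToPartialHomeomorph {X : Type*} [TopologicalSpace X]
    {S : Set X} (f : S ≃ₜ S) : PartialHomeomorph X X where
  toFun x := if hx : x ∈ S then f ⟨x, hx⟩ else x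
  invFun x := if hx : x ∈ S then f.symm ⟨x, hx⟩ else x
  source := S
  target := S
  map_source' x hx := by simp [hx]
  map_target' x hx := by simp [hx]
  left_inv' x hx := by simp [hx]
  right_inv' x hx := by simp [hx]
  continuousOn_toFun := continuousOn_iff_continuous_domRestrict.2 <|
    (continuous_subtype_val.comp f.continuous).congr fun s => by simp
  continuousOn_invFun := continuousOn_iff_continuous_domRestrict.2 <|
    (continuous_subtype_val.comp f.symm.continuous).congr fun s => by simp

theorem Homeomorph.subtypeToPartialHomeomorph_apply {X : Type*} [TopologicalSpace X]
    {S : Set X} (f : S ≃ₜ S) (s : S) : f.subtypeToPartialHomeomorph s = f s := by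
  simp [subtypeToPartialHomeomorph]

/-- Lavrentiev: a homeomorphism of a subset `S` of a Polish space `Z` onto itself
extends to a homeomorphism of a Gδ set `T ⊇ S` onto itself. -/
theorem lavrentiev_extension (Z : Type*) [TopologicalSpace Z] [PolishSpace Z]
    (S : Set Z) (f : ↥S ≃ₜ ↥S) :
    ∃ (T : Set Z) (hST : S ⊆ T), IsGδ T ∧
      ∃ g : ↥T ≃ₜ ↥T, ∀ s : ↥S, (g ⟨(s : Z), hST s.2⟩ : Z) = ((f s : ↥S) : Z) := by
  obtain ⟨e, he, htarget, hS, heq⟩ :=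
    f.subtypeToPartialHomeomorph.exists_isGδ_extension_of_target_eq_source rfl
  exact ⟨e.source, hS, he, e.toHomeomorphSourceTarget.trans (.setCongr htarget),
    fun s => (heq s.2).trans (f.subtypeToPartialHomeomorph_apply s)⟩
end

section
/- The product space 2^ω × S¹ of the Cantor space with the circle is not countable dense homogeneous: there exist countable dense subsets A and B of 2^ω × S¹ such that no homeomorphism h of 2^ω × S¹ satisfies h[A] = B. -/
/-!
Take countable dense sets `D ⊆ X` and `E ⊆ Y` with `y₁ ≠ y₂` in `E`, a point `x₀ ∉ D`
(which exists as `X` is uncountable), and put `A = D × E` and `B = A ∪ {(x₀, y₁)}`.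
Since `X` is totally disconnected and `Y` is connected, a homeomorphism of `X × Y` maps every
vertical fibre `{x} × Y` into a vertical fibre. If `h[A] = B`, the fibre through `h⁻¹(x₀, y₁)`
meets `A` in a copy of `E`, but it lands in `{x₀} × Y`, which meets `B` in a single point;
this contradicts the injectivity of `h`.
-/

open Set TopologicalSpace

def IsCountableDenseHomogeneous (X : Type*) [TopologicalSpace X] : Prop :=
  ∀ A B : Set X, A.Countable → Dense A → B.Countable → Dense B → ∃ h : X ≃ₜ X, h '' A = B

instance : Uncountable (ℕ → Bool) := by
  rw [← Cardinal.aleph0_lt_mk_iff]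
  simpa using Cardinal.cantor Cardinal.aleph0

instance : Nontrivial Circle :=
  ⟨⟨1, Circle.exp Real.pi, by
    simp only [ne_eq, Circle.ext_iff, Circle.coe_one, Circle.coe_exp, Complex.exp_pi_mul_I]
    norm_num⟩⟩

theorem Continuous.apply_eq_of_totallyDisconnectedSpace {Y T : Type*} [TopologicalSpace Y]
    [TopologicalSpace T] [PreconnectedSpace Y] [TotallyDisconnectedSpace T] {f : Y → T}
    (hf : Continuous f) (a b : Y) : f a = f b :=
  (isPreconnected_range hf).subsingleton (mem_range_self a) (mem_range_self b)

theorem not_isCountableDenseHomogeneous_prod {X Y : Type*} [TopologicalSpace X]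
    [TopologicalSpace Y] [SeparableSpace X] [SeparableSpace Y] [Uncountable X]
    [TotallyDisconnectedSpace X] [PreconnectedSpace Y] [Nontrivial Y] :
    ¬ IsCountableDenseHomogeneous (X × Y) := by
  intro hcdh
  obtain ⟨D, hDc, hDd⟩ := exists_countable_dense X
  obtain ⟨E, hEc, hEd⟩ := exists_countable_dense Y
  obtain ⟨x₀, hx₀⟩ : ∃ x₀, x₀ ∉ D := by
    by_contra! hD
    exact not_countable_univ (hDc.mono fun x _ => hD x)
  obtain ⟨y₁, y₂, hy⟩ := exists_pair_ne Y
  set E' := E ∪ {y₁, y₂}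
  have hE'c : E'.Countable := hEc.union ((countable_singleton y₂).insert y₁)
  set A := D ×ˢ E'
  have hAc : A.Countable := hDc.prod hE'c
  have hAd : Dense A := hDd.prod (hEd.mono subset_union_left)
  obtain ⟨h, hAB⟩ := hcdh A (A ∪ {(x₀, y₁)}) hAc hAd (hAc.union (countable_singleton _))
    (hAd.mono subset_union_left)
  obtain ⟨⟨x, y⟩, ⟨hx, -⟩, hxy⟩ : (x₀, y₁) ∈ h '' A := hAB ▸ Or.inr rfl
  have hfibre (y' : Y) : (h (x, y')).1 = x₀ := by
    simpa [hxy] using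
      (h.continuous.fst.comp (Continuous.prodMk_right x)).apply_eq_of_totallyDisconnectedSpace y' y
  have hcollapse : ∀ y' ∈ E', h (x, y') = (x₀, y₁) := by
    intro y' hy'
    rcases (hAB ▸ mem_image_of_mem h ⟨hx, hy'⟩ : h (x, y') ∈ A ∪ {(x₀, y₁)}) with hA | hpt
    · exact absurd (hfibre y' ▸ hA.1) hx₀
    · exact hpt
  have hy₁ : y₁ ∈ E' := Or.inr (mem_insert y₁ _)
  have hy₂ : y₂ ∈ E' := Or.inr (mem_insert_of_mem y₁ rfl)
  exact hy (congrArg Prod.snd (h.injective ((hcollapse y₁ hy₁).trans (hcollapse y₂ hy₂).symm)))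

/-- The product of the Cantor set with the circle is not CDH: there are countable
dense subsets `A`, `B` with no homeomorphism mapping `A` onto `B`. -/
theorem cantor_times_circle_not_cdh :
    ∃ A B : Set ((ℕ → Bool) × Circle),
      A.Countable ∧ Dense A ∧ B.Countable ∧ Dense B ∧
      ∀ h : ((ℕ → Bool) × Circle) ≃ₜ ((ℕ → Bool) × Circle), h '' A ≠ B := by
  simpa [IsCountableDenseHomogeneous] using
    not_isCountableDenseHomogeneous_prod (X := ℕ → Bool) (Y := Circle)
end

section
/- Every Bernstein set is completely Baire: if X ⊆ 2^ω satisfies X ∩ K ≠ ∅ and (2^ω \ X) ∩ K ≠ ∅ for every perfect subset K of 2^ω, then every closed subspace of X (with the subspace topology) is a Baire space. -/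
/-!
If a closed subspace `C` of `X` is not Baire, there are a nonempty open set `W` and dense open
sets `Gₙ` of the compact space `E = closure C` such that `S = W ∩ ⋂ Gₙ` misses `C`. A point of `W`
isolated in `E` would lie in `C` and in every `Gₙ`, so `W` has no isolated points and the Baire
category theorem in `E` makes the Gδ set `S` uncountable. By the perfect set theorem for Borel sets,
`S` then contains a Cantor set `K`. Since `C` is closed in `X`, `K ⊆ closure C \ C` misses `X`,
against the Bernstein property.
-/

open Set Filter Topology Function

instance Pi.perfectSpace_of_infinite {ι : Type*} [Infinite ι] {β : ι → Type*}
    [∀ i, TopologicalSpace (β i)] [∀ i, Nontrivial (β i)] : PerfectSpace (∀ i, β i) := by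
  classical
  refine perfectSpace_iff_forall_not_isolated.2 fun x => mem_closure_iff_nhdsWithin_neBot.1 ?_
  choose y hy using fun i => exists_ne (x i)
  refine mem_closure_of_tendsto (f := fun i => update x i (y i)) (b := cofinite) ?_
    (Eventually.of_forall fun i h => hy i (by simpa using congrFun h i))
  refine tendsto_pi_nhds.2 fun j => tendsto_const_nhds.congr' ?_
  filter_upwards [eventually_cofinite_ne j] with i hij
  exact (update_of_ne hij.symm _ _).symm

theorem Continuous.perfect_range {X α : Type*} [TopologicalSpace X] [CompactSpace X]
    [PerfectSpace X] [TopologicalSpace α] [T2Space α] {f : X → α} (hf : Continuous f)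
    (hinj : Injective f) : Perfect (range f) := by
  refine ⟨(isCompact_range hf).isClosed, preperfect_iff_nhds.2 ?_⟩
  rintro _ ⟨x, rfl⟩ U hU
  obtain ⟨x', hx'U, hx'x⟩ :=
    Filter.nonempty_of_mem <|
      inter_mem (nhdsWithin_le_nhds (hf.continuousAt hU)) (self_mem_nhdsWithin (s := {x}ᶜ))
  exact ⟨f x', ⟨hx'U, x', rfl⟩, hinj.ne hx'x⟩

theorem MeasurableSet.exists_nat_bool_injection_of_not_countable {α : Type*}
    [TopologicalSpace α] [PolishSpace α] [MeasurableSpace α] [BorelSpace α] {s : Set α}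
    (hs : MeasurableSet s) (hunc : ¬s.Countable) :
    ∃ f : (ℕ → Bool) → α, range f ⊆ s ∧ Continuous f ∧ Injective f := by
  obtain ⟨t', t't, ht', hs', -⟩ := hs.isClopenable
  obtain ⟨f, hfs, hf, hinj⟩ :=
    @IsClosed.exists_nat_bool_injection_of_not_countable α t' ht' s hs' hunc
  exact ⟨f, hfs, continuous_le_rng t't hf, hinj⟩

theorem IsOpen.not_countable_inter_of_mem_residual {E : Type*} [TopologicalSpace E]
    [BaireSpace E] [T1Space E] {U S : Set E} (hU : IsOpen U) (hne : U.Nonempty)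
    (hacc : ∀ x ∈ U, (𝓝[≠] x).NeBot) (hS : S ∈ residual E) : ¬(U ∩ S).Countable := by
  intro hc
  have hcompl : (U ∩ S)ᶜ ∈ residual E := by
    rw [← biUnion_of_singleton (U ∩ S), compl_iUnion₂]
    refine (countable_bInter_mem hc).2 fun x hx => ?_
    have := hacc x hx.1
    exact residual_of_dense_open isOpen_compl_singleton (dense_compl_singleton x)
  obtain ⟨x, hxU, hxS, hx⟩ :=
    (dense_of_mem_residual (inter_mem hS hcompl)).inter_open_nonempty U hU hne
  exact hx ⟨hxU, hxS⟩

theorem exists_isOpen_disjoint_iInter_of_not_baireSpace {Y : Type*} [TopologicalSpace Y]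
    (hY : ¬BaireSpace Y) : ∃ f : ℕ → Set Y, (∀ n, IsOpen (f n)) ∧ (∀ n, Dense (f n)) ∧
      ∃ O, IsOpen O ∧ O.Nonempty ∧ Disjoint O (⋂ n, f n) := by
  by_contra! h
  refine hY ⟨fun f ho hd => dense_iff_inter_open.2 fun O hO hne => ?_⟩
  exact not_disjoint_iff_nonempty_inter.1 (h f ho hd O hO hne)

namespace Topology.IsInducing

variable {Y : Type*} [TopologicalSpace Y]

theorem exists_isGδ_disjoint_range_of_not_baireSpace {E : Type*} [TopologicalSpace E]
    [BaireSpace E] [T1Space E] {ι : Y → E} (hι : IsInducing ι) (hd : DenseRange ι)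
    (hY : ¬BaireSpace Y) : ∃ S : Set E, IsGδ S ∧ Disjoint S (range ι) ∧ ¬S.Countable := by
  obtain ⟨f, hfo, hfd, O, hOo, ⟨y, hyO⟩, hOf⟩ := exists_isOpen_disjoint_iInter_of_not_baireSpace hY
  choose G hGo hGf using fun n => hι.isOpen_iff.1 (hfo n)
  obtain ⟨W, hWo, rfl⟩ := hι.isOpen_iff.1 hOo
  have hGd : ∀ n, Dense (G n) := fun n =>
    (hd.dense_image hι.continuous (hfd n)).mono (image_subset_iff.2 (hGf n).ge)
  have hdisj : Disjoint (W ∩ ⋂ n, G n) (range ι) := by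
    refine disjoint_left.2 ?_
    rintro _ ⟨hW, hG⟩ ⟨y, rfl⟩
    refine hOf.ne_of_mem hW (mem_iInter.2 fun n => ?_) rfl
    rw [← hGf n]
    exact mem_iInter.1 hG n
  refine ⟨W ∩ ⋂ n, G n, hWo.isGδ.inter (.iInter_of_isOpen hGo), hdisj,
    hWo.not_countable_inter_of_mem_residual ⟨ι y, hyO⟩ (fun x hxW => ?_)
      (countable_iInter_mem.2 fun n => residual_of_dense_open (hGo n) (hGd n))⟩
  by_contra hx
  rw [not_neBot, ← isOpen_singleton_iff_punctured_nhds] at hx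
  have hmem : ∀ {s : Set E}, Dense s → x ∈ s := fun hs => by
    obtain ⟨_, rfl, h⟩ := hs.inter_open_nonempty {x} hx (singleton_nonempty x)
    exact h
  exact hdisj.ne_of_mem ⟨hxW, mem_iInter.2 fun n => hmem (hGd n)⟩ (hmem hd) rfl

theorem exists_nat_bool_injection_of_not_baireSpace {α : Type*} [TopologicalSpace α]
    [PolishSpace α] {ι : Y → α} (hι : IsInducing ι) (hY : ¬BaireSpace Y) :
    ∃ f : (ℕ → Bool) → α, range f ⊆ closure (range ι) \ range ι ∧ Continuous f ∧ Injective f := by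
  set E := closure (range ι)
  have : PolishSpace E := isClosed_closure.polishSpace
  let ι' : Y → E := Set.codRestrict ι E fun y => subset_closure (mem_range_self y)
  have hd : DenseRange ι' := by
    rw [DenseRange, Subtype.dense_iff, ← range_comp]
    rfl
  obtain ⟨S, hSG, hSdisj, hSunc⟩ :=
    (hι.codRestrict _).exists_isGδ_disjoint_range_of_not_baireSpace hd hY
  borelize ↥E
  obtain ⟨f, hfS, hf, hinj⟩ := hSG.measurableSet.exists_nat_bool_injection_of_not_countable hSunc
  refine ⟨(↑) ∘ f, ?_, continuous_subtype_val.comp hf, Subtype.val_injective.comp hinj⟩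
  rintro _ ⟨x, rfl⟩
  refine ⟨(f x).2, ?_⟩
  rintro ⟨y, hy⟩
  exact hSdisj.ne_of_mem (hfS ⟨x, rfl⟩) ⟨y, rfl⟩ (Subtype.ext hy.symm)

end Topology.IsInducing

/-- Every Bernstein set in the Cantor space is completely Baire: every closed
subspace of it is a Baire space. -/
theorem bernstein_set_completely_baire (X : Set (ℕ → Bool))
    (hBernstein : ∀ K : Set (ℕ → Bool), Perfect K → K.Nonempty →
      (X ∩ K).Nonempty ∧ (Xᶜ ∩ K).Nonempty) :
    ∀ C : Set ↥X, IsClosed C → BaireSpace ↥C := by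
  intro C hC
  by_contra hC'
  -- instance search fails on this goal, although both parent instances are found
  have : PolishSpace (ℕ → Bool) := {}
  have hι : IsInducing (Subtype.val ∘ Subtype.val : C → ℕ → Bool) :=
    IsInducing.subtypeVal.comp IsInducing.subtypeVal
  obtain ⟨f, hfC, hf, hinj⟩ := hι.exists_nat_bool_injection_of_not_baireSpace hC'
  obtain ⟨_, hxX, x, rfl⟩ := (hBernstein _ (hf.perfect_range hinj) (range_nonempty f)).1
  obtain ⟨hcl, hnot⟩ := hfC ⟨x, rfl⟩
  rw [range_comp, Subtype.range_coe] at hcl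
  have hxC : (⟨f x, hxX⟩ : X) ∈ C := hC.closure_eq ▸ closure_subtype.2 hcl
  exact hnot ⟨⟨_, hxC⟩, rfl⟩
end

section
/- The product (ω+1) × 2^ω of the convergent sequence ω+1 with the Cantor space is homeomorphic to the Cantor space 2^ω; moreover ω+1 itself is not countable dense homogeneous. Consequently, a factor of a countable dense homogeneous product need not be countable dense homogeneous. -/
open Filter Topology OnePoint

theorem CDH.eq_univ_of_dense {X : Type*} [TopologicalSpace X] [Countable X] (hX : CDH X)
    {D : Set X} (hD : Dense D) : D = Set.univ := by
  obtain ⟨h, hDh⟩ := hX D Set.univ D.to_countable hD Set.countable_univ dense_univ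
  rwa [← Set.image_univ_of_surjective h.surjective, Set.image_eq_image h.injective] at hDh

theorem OnePoint.not_cdh_nat : ¬ CDH (OnePoint ℕ) := fun h =>
  infty_notMem_range_coe ((h.eq_univ_of_dense denseRange_coe).symm ▸ Set.mem_univ ∞)

theorem OnePoint.continuous_prod_of_eventually_eq {X Y Z : Type*} [TopologicalSpace X]
    [DiscreteTopology X] [TopologicalSpace Y] [TopologicalSpace Z]
    {f : OnePoint X × Y → Z} (hcoe : ∀ x : X, Continuous fun y => f (x, y))
    (hinfty : Continuous fun y => f (∞, y))
    (hev : ∀ᶠ x : X in cofinite, ∀ y, f (x, y) = f (∞, y)) :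
    Continuous f := by
  have key : ∀ p : OnePoint X, Continuous (fun y => f (p, y)) →
      {q | ∀ y, f (q, y) = f (p, y)} ∈ 𝓝 p → ∀ y, ContinuousAt f (p, y) := fun p hp hnhds y =>
    (hp.comp continuous_snd).continuousAt.congr <|
      mem_of_superset (prod_mem_nhds hnhds univ_mem) fun q hq => (hq.1 q.2).symm
  rw [continuous_iff_continuousAt]
  rintro ⟨p, y⟩
  induction p using OnePoint.rec with
  | infty =>
    refine key ∞ hinfty ?_ y
    rw [nhds_infty_eq, coclosedCompact_eq_cocompact, cocompact_eq_cofinite]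
    exact ⟨hev, fun _ => rfl⟩
  | coe x =>
    have hx : (↑) '' {x} ∈ 𝓝 (x : OnePoint X) :=
      (isOpenMap_coe _ (isOpen_discrete {x})).mem_nhds (Set.mem_image_of_mem _ rfl)
    exact key x (hcoe x) (mem_of_superset hx <| by rintro _ ⟨_, rfl, rfl⟩ _; rfl) y

namespace OnePointProdCantor

def interleaveTrue (x : ℕ → Bool) (k : ℕ) : Bool := if k % 2 = 0 then true else x (k / 2)

@[simp] theorem interleaveTrue_two_mul (x : ℕ → Bool) (i : ℕ) :
    interleaveTrue x (2 * i) = true := by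
  simp [interleaveTrue]

@[simp] theorem interleaveTrue_two_mul_add_one (x : ℕ → Bool) (i : ℕ) :
    interleaveTrue x (2 * i + 1) = x i := by
  simp [interleaveTrue, Nat.add_mod, Nat.add_div]

def encodeNat (n : ℕ) (x : ℕ → Bool) (k : ℕ) : Bool :=
  if k < 2 * n then interleaveTrue x k else if k = 2 * n then false else x (k - n - 1)

def encode (q : OnePoint ℕ × (ℕ → Bool)) : ℕ → Bool :=
  q.1.elim (interleaveTrue q.2) fun n => encodeNat n q.2

@[simp] theorem encode_infty (x : ℕ → Bool) : encode (∞, x) = interleaveTrue x := rfl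

@[simp] theorem encode_coe (n : ℕ) (x : ℕ → Bool) : encode (n, x) = encodeNat n x := rfl

theorem encodeNat_of_lt {n k : ℕ} (x : ℕ → Bool) (hk : k < 2 * n) :
    encodeNat n x k = interleaveTrue x k := if_pos hk

@[simp] theorem encodeNat_two_mul (n : ℕ) (x : ℕ → Bool) : encodeNat n x (2 * n) = false := by
  simp [encodeNat]

theorem encodeNat_add_add_one {n i : ℕ} (x : ℕ → Bool) (hi : n ≤ i) :
    encodeNat n x (n + i + 1) = x i := by
  rw [encodeNat, if_neg (by omega), if_neg (by omega)]
  congr 1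
  omega

def decodeTail (n : ℕ) (y : ℕ → Bool) (i : ℕ) : Bool :=
  if i < n then y (2 * i + 1) else y (n + i + 1)

open Classical in
noncomputable def decode (y : ℕ → Bool) : OnePoint ℕ × (ℕ → Bool) :=
  if h : ∃ n, y (2 * n) = false then (Nat.find h, decodeTail (Nat.find h) y)
  else (∞, fun i => y (2 * i + 1))

theorem decode_encode (q : OnePoint ℕ × (ℕ → Bool)) : decode (encode q) = q := by
  obtain ⟨p, x⟩ := q
  induction p using OnePoint.rec with
  | infty => simp [decode]
  | coe n =>
    have hex : ∃ m, encodeNat n x (2 * m) = false := ⟨n, encodeNat_two_mul n x⟩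
    have hfind : Nat.find hex = n := by
      rw [Nat.find_eq_iff]
      refine ⟨encodeNat_two_mul n x, fun m hm => ?_⟩
      simp [encodeNat_of_lt x (show 2 * m < 2 * n by omega)]
    have htail : decodeTail n (encodeNat n x) = x := by
      funext i
      unfold decodeTail
      split_ifs with hi
      · rw [encodeNat_of_lt x (by omega), interleaveTrue_two_mul_add_one]
      · exact encodeNat_add_add_one x (not_lt.1 hi)
    rw [encode_coe, decode, dif_pos hex, hfind, htail]

theorem encode_decode (y : ℕ → Bool) : encode (decode y) = y := by
  unfold decode
  split_ifs with h
  · set n := Nat.find h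
    funext k
    rw [encode_coe]
    rcases lt_trichotomy k (2 * n) with hk | rfl | hk
    · rw [encodeNat_of_lt _ hk]
      obtain ⟨i, rfl | rfl⟩ := Nat.even_or_odd' k
      · rw [interleaveTrue_two_mul]
        simpa using Nat.find_min h (show i < n by omega)
      · rw [interleaveTrue_two_mul_add_one, decodeTail, if_pos (by omega)]
    · rw [encodeNat_two_mul, Nat.find_spec h]
    · obtain ⟨i, hi, rfl⟩ : ∃ i, n ≤ i ∧ k = n + i + 1 := ⟨k - n - 1, by omega, by omega⟩
      rw [encodeNat_add_add_one _ hi, decodeTail, if_neg (by omega)]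
  · simp only [not_exists, Bool.not_eq_false] at h
    funext k
    obtain ⟨i, rfl | rfl⟩ := Nat.even_or_odd' k
    · simp [h i]
    · simp

theorem continuous_encode : Continuous encode := by
  refine continuous_pi fun k => continuous_prod_of_eventually_eq (fun n => ?_) ?_ ?_
  · simp only [encode_coe, encodeNat, interleaveTrue]
    fun_prop
  · simp only [encode_infty, interleaveTrue]
    fun_prop
  · rw [Nat.cofinite_eq_atTop]
    filter_upwards [eventually_gt_atTop k] with n hn x
    rw [encode_coe, encode_infty, encodeNat_of_lt x (by omega)]

noncomputable def homeomorph : (OnePoint ℕ × (ℕ → Bool)) ≃ₜ (ℕ → Bool) :=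
  Continuous.homeoOfEquivCompactToT2
    (f := { toFun := encode, invFun := decode, left_inv := decode_encode,
            right_inv := encode_decode })
    continuous_encode

end OnePointProdCantor

/-- `(ω+1) × 2^ω` is homeomorphic to the Cantor set (which is CDH), while `ω+1`
itself is not CDH: a factor of a CDH product need not be CDH. -/
theorem factor_of_cdh_product_need_not_be_cdh :
    Nonempty ((OnePoint ℕ × (ℕ → Bool)) ≃ₜ (ℕ → Bool)) ∧ ¬ CDH (OnePoint ℕ) :=
  ⟨⟨OnePointProdCantor.homeomorph⟩, OnePoint.not_cdh_nat⟩
end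

section
/- Let λ be an infinite cardinal and let A be a λ-dense subset of the Cantor space 2^ω, i.e. |A ∩ U| = λ for every nonempty open subset U of 2^ω. Then A can be partitioned into λ many pairwise disjoint sets, each of which is a countable dense subset of 2^ω. -/
/-!
Enumerate `κ × ℕ` in order type `κ.ord` and fix a countable basis `(U n)` of nonempty open sets.
By transfinite recursion choose distinct points `x (i, n) ∈ A ∩ U n`: before each stage fewer
than `κ` points have been chosen, while `A ∩ U n` has `κ` points. Put `x (i, n)` into the piece
`D i` for every `n`, so that `D i` meets every `U n` and is dense; the at most `κ` remaining points
of `A` are then distributed among the pieces, at most one per piece, which keeps them countable.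
-/

open Cardinal Set Function TopologicalSpace

universe u v

theorem exists_injective_forall_mem {J : Type v} {α : Type u} (S : J → Set α)
    (hS : ∀ j, lift.{u} #J ≤ lift.{v} #(S j)) :
    ∃ f : J → α, Injective f ∧ ∀ j, f j ∈ S j := by
  obtain ⟨_, _, hJ⟩ := exists_ord_eq_type_lt J
  -- in a well-order of type `ord #J`, every initial segment is smaller than `J`
  have step : ∀ (j : J) (g : ∀ i, i < j → α), ∃ x ∈ S j, ∀ i hi, g i hi ≠ x := by
    intro j g
    have hsmall : lift.{v} #(range fun i : Iio j => g i i.2) < lift.{v} #(S j) :=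
      calc lift.{v} #(range fun i : Iio j => g i i.2) ≤ lift.{u} #(Iio j) := mk_range_le_lift
        _ < lift.{u} #J := lift_strictMono (mk_Iio_lt j hJ)
        _ ≤ lift.{v} #(S j) := hS j
    obtain ⟨x, hxS, hxg⟩ := sdiff_nonempty_of_mk_lt_mk (lift_lt.mp hsmall)
    exact ⟨x, hxS, fun i hi h => hxg ⟨⟨i, hi⟩, h⟩⟩
  let f : J → α := wellFounded_lt.fix fun j g => (step j g).choose
  have hf : ∀ j, f j ∈ S j ∧ ∀ i < j, f i ≠ f j := fun j => by
    rw [show f j = _ from wellFounded_lt.fix_eq _ j]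
    exact (step j _).choose_spec
  exact ⟨f, Injective.of_lt_imp_ne fun i j hij => (hf j).2 i hij, fun j => (hf j).1⟩

theorem exists_countable_partition_of_injective {α : Type u} {K : Type v} {A : Set α}
    (f : K × ℕ → α) (hf : Injective f) (hfA : ∀ p, f p ∈ A) (hA : lift.{v} #A ≤ lift.{u} #K) :
    ∃ D : K → Set α, Pairwise (Disjoint on D) ∧ ⋃ i, D i = A ∧
      ∀ i, (D i).Countable ∧ ∀ n, f (i, n) ∈ D i := by
  classical
  obtain ⟨r⟩ : Nonempty (A ↪ K) := lift_mk_le'.mp hA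
  -- the pieces are the fibres of `c`; points outside `range f` are coloured injectively by `r`
  let c : A → K := fun a =>
    if h : (a : α) ∈ range f then ((Equiv.ofInjective f hf).symm ⟨a, h⟩).1 else r a
  have hc : ∀ p, c ⟨f p, hfA p⟩ = p.1 := fun p => by
    simp only [c, mem_range_self, dite_true, Equiv.ofInjective_symm_apply]
  refine ⟨fun i => (↑) '' (c ⁻¹' {i}), fun i j hij => ?_, ?_, fun i => ⟨?_, fun n => ?_⟩⟩
  · exact (disjoint_image_iff Subtype.val_injective).2 (pairwise_disjoint_fiber c hij)
  · rw [← image_iUnion, ← preimage_iUnion, iUnion_of_singleton, preimage_univ, image_univ,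
      Subtype.range_coe]
  · have hsub : (↑) '' (c ⁻¹' {i}) ⊆ range (fun n => f (i, n)) ∪ (↑) '' (r ⁻¹' {i}) := by
      rintro _ ⟨a, hai : c a = i, rfl⟩
      by_cases ha : (a : α) ∈ range f
      · obtain ⟨⟨j, n⟩, hp⟩ := ha
        obtain rfl : a = ⟨f (j, n), hfA _⟩ := Subtype.ext hp.symm
        obtain rfl : j = i := (hc (j, n)).symm.trans hai
        exact Or.inl ⟨n, rfl⟩
      · exact Or.inr ⟨a, (dif_neg ha).symm.trans hai, rfl⟩
    refine ((countable_range _).union (Subsingleton.countable ?_)).mono hsub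
    exact (subsingleton_singleton.preimage r.injective).image _
  · exact ⟨⟨f (i, n), hfA _⟩, hc _, rfl⟩

theorem exists_seq_nonempty_isTopologicalBasis (X : Type u) [TopologicalSpace X]
    [SecondCountableTopology X] [Nonempty X] :
    ∃ u : ℕ → Set X, IsTopologicalBasis (range u) ∧ ∀ n, (u n).Nonempty := by
  obtain ⟨b, hbc, hb0, hb⟩ := exists_countable_basis X
  have hbne : b.Nonempty :=
    let ⟨x⟩ := ‹Nonempty X›
    let ⟨o, ho, _⟩ := hb.exists_subset_of_mem_open (mem_univ x) isOpen_univ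
    ⟨o, ho⟩
  obtain ⟨u, rfl⟩ := hbc.exists_eq_range hbne
  exact ⟨u, hb, fun n => nonempty_iff_ne_empty.mpr fun h => hb0 ⟨n, h⟩⟩

theorem exists_countable_dense_partition {X : Type u} [TopologicalSpace X]
    [SecondCountableTopology X] [Nonempty X] {κ : Cardinal.{u}} (hκ : ℵ₀ ≤ κ) {A : Set X}
    (hA : ∀ U, IsOpen U → U.Nonempty → κ ≤ #↥(A ∩ U)) (hAκ : #A ≤ κ) :
    ∃ (ι : Type u) (D : ι → Set X), #ι = κ ∧ Pairwise (Disjoint on D) ∧ ⋃ i, D i = A ∧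
      ∀ i, (D i).Countable ∧ Dense (D i) := by
  obtain ⟨u, hu, hune⟩ := exists_seq_nonempty_isTopologicalBasis X
  have hκℕ : #(κ.out × ℕ) = κ := by simp [mk_out, mul_aleph0_eq hκ]
  obtain ⟨f, hf, hfA⟩ := exists_injective_forall_mem (fun p : κ.out × ℕ => A ∩ u p.2)
    fun p => by simpa [hκℕ] using hA _ (hu.isOpen (mem_range_self _)) (hune _)
  obtain ⟨D, hdisj, hunion, hD⟩ :=
    exists_countable_partition_of_injective f hf (fun p => (hfA p).1) (by simpa [mk_out])
  refine ⟨κ.out, D, mk_out κ, hdisj, hunion, fun i => ⟨(hD i).1, ?_⟩⟩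
  rw [hu.dense_iff]
  rintro _ ⟨n, rfl⟩ -
  exact ⟨f (i, n), (hfA (i, n)).2, (hD i).2 n⟩

open Cardinal in
/-- A `λ`-dense subset of the Cantor set (for `λ` an infinite cardinal) can be
partitioned into `λ` many pairwise disjoint countable dense subsets. -/
theorem lambda_dense_partition (lam : Cardinal.{0}) (hlam : Cardinal.aleph0 ≤ lam)
    (A : Set (ℕ → Bool))
    (hA : ∀ U : Set (ℕ → Bool), IsOpen U → U.Nonempty → Cardinal.mk ↥(A ∩ U) = lam) :
    ∃ (ι : Type) (D : ι → Set (ℕ → Bool)),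
      Cardinal.mk ι = lam ∧
      Pairwise (fun i j => Disjoint (D i) (D j)) ∧
      (⋃ i, D i) = A ∧
      ∀ i, (D i).Countable ∧ Dense (D i) := by
  have hAle : #A ≤ lam := by simpa using (hA univ isOpen_univ univ_nonempty).le
  exact exists_countable_dense_partition hlam (fun U hU hne => (hA U hU hne).ge) hAle
end

section
/- Let X be a separable metrizable space without isolated points. Then there exists a countable dense subset D of X × X such that the restriction of the first-coordinate projection π₀ to D is injective. -/
/-!
Enumerate a countable basis of `X × X` by its nonempty members `Uᵢ`. Without isolated points
every nonempty open subset of `X` is infinite, so the projections `π₀ Uᵢ` are infinite and a greedy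
choice picks pairwise distinct `xᵢ ∈ π₀ Uᵢ`. Points `(xᵢ, yᵢ) ∈ Uᵢ` then form the required set.
-/

open Set Function Filter TopologicalSpace Topology

theorem Set.exists_injective_forall_mem_of_infinite_nat {α : Type*} {S : ℕ → Set α}
    (hS : ∀ n, (S n).Infinite) : ∃ f : ℕ → α, Injective f ∧ ∀ n, f n ∈ S n := by
  classical
  choose g hgS hg using fun n (t : Finset α) => (hS n).exists_notMem_finset t
  -- `t n` is the finite set of values chosen before step `n`
  let t : ℕ → Finset α := fun n => Nat.rec ∅ (fun k tk => insert (g k tk) tk) n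
  have mem_t {m n : ℕ} (hmn : m < n) : g m (t m) ∈ t n := by
    induction n, hmn using Nat.le_induction with
    | base => exact Finset.mem_insert_self _ _
    | succ n _ ih => exact Finset.mem_insert_of_mem ih
  refine ⟨fun n => g n (t n), ?_, fun n => hgS n _⟩
  exact Injective.of_lt_imp_ne fun m n hmn h => hg n (t n) (h ▸ mem_t hmn)

theorem Set.exists_injective_forall_mem_of_infinite {ι α : Type*} [Countable ι]
    {S : ι → Set α} (hS : ∀ i, (S i).Infinite) : ∃ f : ι → α, Injective f ∧ ∀ i, f i ∈ S i := by
  cases isEmpty_or_nonempty ι with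
  | inl _ => exact ⟨isEmptyElim, injective_of_subsingleton _, isEmptyElim⟩
  | inr _ =>
    obtain ⟨e, he⟩ := exists_surjective_nat ι
    obtain ⟨f, hf, hfS⟩ := exists_injective_forall_mem_of_infinite_nat fun n => hS (e n)
    refine ⟨f ∘ surjInv he, hf.comp (injective_surjInv he), fun i => ?_⟩
    simpa only [comp_apply, surjInv_eq he] using hfS (surjInv he i)

theorem IsOpen.infinite_of_nonempty {X : Type*} [TopologicalSpace X] [T1Space X]
    (hiso : ∀ x : X, ¬IsOpen ({x} : Set X)) {U : Set X} (hU : IsOpen U) (hne : U.Nonempty) :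
    U.Infinite := by
  obtain ⟨x, hx⟩ := hne
  have : NeBot (𝓝[≠] x) := ⟨by rw [Ne, ← isOpen_singleton_iff_punctured_nhds]; exact hiso x⟩
  exact infinite_of_mem_nhds x (hU.mem_nhds hx)

theorem exists_countable_dense_injOn_fst {X Y : Type*} [TopologicalSpace X] [T1Space X]
    [TopologicalSpace Y] [SecondCountableTopology (X × Y)]
    (hiso : ∀ x : X, ¬IsOpen ({x} : Set X)) :
    ∃ D : Set (X × Y), D.Countable ∧ Dense D ∧ InjOn Prod.fst D := by
  obtain ⟨b, hbc, hb_empty, hb⟩ := exists_countable_basis (X × Y)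
  have : Countable b := hbc.to_subtype
  have hfst_infinite (U : b) : (Prod.fst '' (U : Set (X × Y))).Infinite :=
    (isOpenMap_fst _ (hb.isOpen U.2)).infinite_of_nonempty hiso
      ((nonempty_iff_ne_empty.2 fun h => hb_empty (h ▸ U.2)).image _)
  obtain ⟨x, hx_inj, hx⟩ := exists_injective_forall_mem_of_infinite hfst_infinite
  choose p hpU hp_fst using hx
  refine ⟨range p, countable_range p,
    hb.dense_iff.2 fun U hU _ => ⟨p ⟨U, hU⟩, hpU ⟨U, hU⟩, mem_range_self _⟩, ?_⟩
  rintro _ ⟨U, rfl⟩ _ ⟨V, rfl⟩ h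
  rw [hp_fst, hp_fst] at h
  rw [hx_inj h]

/-- In the square of a separable metrizable space without isolated points there
is a countable dense subset on which the first-coordinate projection is injective. -/
theorem exists_countable_dense_injective_projection
    (X : Type*) [TopologicalSpace X] [TopologicalSpace.SeparableSpace X]
    [TopologicalSpace.MetrizableSpace X]
    (hiso : ∀ x : X, ¬ IsOpen ({x} : Set X)) :
    ∃ D : Set (X × X), D.Countable ∧ Dense D ∧ Set.InjOn Prod.fst D := by
  let := metrizableSpaceMetric X
  exact exists_countable_dense_injOn_fst hiso
end

section
/- The Cantor space 2^ω and the Baire space ω^ω are countable dense homogeneous: for every pair (A,B) of countable dense subsets of 2^ω (respectively ω^ω) there exists a homeomorphism h of 2^ω (respectively ω^ω) such that h[A]=B. -/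
open Set Function

theorem exists_notMem_image_snd {D : Type*} {T : Set (D × D)} (hT : T.Finite)
    (hT' : ∀ t ∈ T, ∀ u ∈ T, t.1 = u.1 ↔ t.2 = u.2) {c : D} (hc : c ∉ Prod.fst '' T) :
    ∃ d, d ∉ Prod.snd '' T := by
  cases finite_or_infinite D
  · by_contra! h
    have hfst : (Prod.fst '' T).ncard = T.ncard :=
      InjOn.ncard_image fun t ht u hu htu => Prod.ext htu ((hT' t ht u hu).1 htu)
    have hsnd : (Prod.snd '' T).ncard = T.ncard :=
      InjOn.ncard_image fun t ht u hu htu => Prod.ext ((hT' t ht u hu).2 htu) htu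
    have hlt : (Prod.fst '' T).ncard < (Prod.snd '' T).ncard := by
      rw [eq_univ_of_forall h]
      exact ncard_lt_ncard (ssubset_univ_iff.2 fun h' => hc (h' ▸ mem_univ c))
    omega
  · exact (hT.image _).infinite_compl.nonempty

namespace PiNat

variable {D : Type*}

theorem mem_cylinder_succ {E : ℕ → Type*} {x y : ∀ n, E n} {n : ℕ} :
    y ∈ cylinder x (n + 1) ↔ y ∈ cylinder x n ∧ y n = x n := by
  simp only [mem_cylinder_iff, Nat.lt_succ_iff_lt_or_eq, or_imp, forall_and, forall_eq]

theorem eq_of_forall_mem_cylinder {E : ℕ → Type*} {x y : ∀ n, E n}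
    (h : ∀ n, y ∈ cylinder x n) : y = x :=
  funext fun n => h (n + 1) n n.lt_succ_self

theorem exists_mem_cylinder_forall_notMem_cylinder_succ {s : Set (ℕ → D)} (hs : s.Finite)
    (hne : s.Nonempty) {a : ℕ → D} (ha : a ∉ s) :
    ∃ M, ∃ x ∈ s, x ∈ cylinder a M ∧ ∀ y ∈ s, y ∉ cylinder a (M + 1) := by
  obtain ⟨x, hx, hmax⟩ := exists_max_image s (firstDiff a) hs hne
  refine ⟨firstDiff a x, x, hx, (mem_cylinder_comm _ _ _).1 (mem_cylinder_firstDiff a x),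
    fun y hy hya => ?_⟩
  have hay : a ≠ y := fun h => ha (h ▸ hy)
  have := (mem_cylinder_iff_le_firstDiff hay _).1 ((mem_cylinder_comm _ _ _).1 hya)
  exact absurd (hmax y hy) (by omega)

/-- Graph of a partial isometry of `ℕ → D` for the first-difference ultrametric `PiNat.dist`. -/
def IsPartialIsometry (R : Set ((ℕ → D) × (ℕ → D))) : Prop :=
  ∀ p ∈ R, ∀ q ∈ R, ∀ n, q.1 ∈ cylinder p.1 n ↔ q.2 ∈ cylinder p.2 n

open Classical in
/-- The default `x n` is junk, never reached when the first components of `R` are dense. -/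
noncomputable def extendOfGraph (R : Set ((ℕ → D) × (ℕ → D))) (x : ℕ → D) (n : ℕ) : D :=
  if h : ∃ p ∈ R, x ∈ cylinder p.1 (n + 1) then h.choose.2 n else x n

theorem exists_mem_cylinder_of_dense_image_fst [TopologicalSpace D] [DiscreteTopology D]
    {R : Set ((ℕ → D) × (ℕ → D))} (hdense : Dense (Prod.fst '' R)) (x : ℕ → D) (n : ℕ) :
    ∃ p ∈ R, x ∈ cylinder p.1 n := by
  obtain ⟨_, ⟨p, hp, rfl⟩, hpx⟩ :=
    hdense.exists_mem_open (isOpen_cylinder _ x n) ⟨x, self_mem_cylinder x n⟩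
  exact ⟨p, hp, (mem_cylinder_comm _ _ _).1 hpx⟩

namespace IsPartialIsometry

variable {R P : Set ((ℕ → D) × (ℕ → D))}

theorem image_swap (hR : IsPartialIsometry R) : IsPartialIsometry (Prod.swap '' R) := by
  rintro _ ⟨p, hp, rfl⟩ _ ⟨q, hq, rfl⟩ n
  exact (hR p hp q hq n).symm

theorem insert_of_forall (hP : IsPartialIsometry P) {a b : ℕ → D}
    (h : ∀ q ∈ P, ∀ n, q.1 ∈ cylinder a n ↔ q.2 ∈ cylinder b n) :
    IsPartialIsometry (insert (a, b) P) := by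
  rintro p (rfl | hp) q (rfl | hq) n
  · exact iff_of_true (self_mem_cylinder _ _) (self_mem_cylinder _ _)
  · exact h q hq n
  · rw [mem_cylinder_comm p.1, mem_cylinder_comm p.2]
    exact h p hp n
  · exact hP p hp q hq n

theorem insert_of_isolated (hP : IsPartialIsometry P) {p₀ : (ℕ → D) × (ℕ → D)} (hp₀ : p₀ ∈ P)
    {a b : ℕ → D} {M : ℕ} (ha : p₀.1 ∈ cylinder a M) (hb : p₀.2 ∈ cylinder b M)
    (ha' : ∀ q ∈ P, q.1 ∉ cylinder a (M + 1)) (hb' : ∀ q ∈ P, q.2 ∉ cylinder b (M + 1)) :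
    IsPartialIsometry (insert (a, b) P) := by
  refine hP.insert_of_forall fun q hq n => ?_
  rcases le_or_gt n M with hn | hn
  · rw [← mem_cylinder_iff_eq.1 (cylinder_anti _ hn ha),
      ← mem_cylinder_iff_eq.1 (cylinder_anti _ hn hb)]
    exact hP p₀ hp₀ q hq n
  · exact iff_of_false (fun h => ha' q hq (cylinder_anti _ hn h))
      (fun h => hb' q hq (cylinder_anti _ hn h))

theorem exists_forall_apply_ne (hP : IsPartialIsometry P) (hPfin : P.Finite) {a : ℕ → D}
    {M : ℕ} (ha : ∀ q ∈ P, q.1 ∉ cylinder a (M + 1)) :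
    ∃ d, ∀ q ∈ P, q.1 ∈ cylinder a M → q.2 M ≠ d := by
  set T := (fun q : (ℕ → D) × (ℕ → D) => (q.1 M, q.2 M)) '' {q ∈ P | q.1 ∈ cylinder a M}
  have hT : ∀ t ∈ T, ∀ u ∈ T, t.1 = u.1 ↔ t.2 = u.2 := by
    rintro _ ⟨q, ⟨hq, hqa⟩, rfl⟩ _ ⟨r, ⟨hr, hra⟩, rfl⟩
    have hrq : r.1 ∈ cylinder q.1 M := (mem_cylinder_iff_eq.1 hqa).symm.subset hra
    have := hP q hq r hr (M + 1)
    simp only [mem_cylinder_succ, hrq, (hP q hq r hr M).1 hrq, true_and] at this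
    exact eq_comm.trans (this.trans eq_comm)
  have haT : a M ∉ Prod.fst '' T := by
    rintro ⟨_, ⟨q, ⟨hq, hqa⟩, rfl⟩, hqM⟩
    exact ha q hq (mem_cylinder_succ.2 ⟨hqa, hqM⟩)
  obtain ⟨d, hd⟩ := exists_notMem_image_snd ((hPfin.subset (sep_subset _ _)).image _) hT haT
  exact ⟨d, fun q hq hqa hqd => hd ⟨_, ⟨q, ⟨hq, hqa⟩, rfl⟩, hqd⟩⟩

theorem mapsTo_extendOfGraph (hR : IsPartialIsometry R) {p : (ℕ → D) × (ℕ → D)} (hp : p ∈ R)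
    (n : ℕ) : MapsTo (extendOfGraph R) (cylinder p.1 n) (cylinder p.2 n) := by
  intro x hx
  refine mem_cylinder_iff.2 fun k hk => ?_
  have h : ∃ q ∈ R, x ∈ cylinder q.1 (k + 1) := ⟨p, hp, cylinder_anti _ hk hx⟩
  obtain ⟨hqR, hxq⟩ := h.choose_spec
  have hpq : p.1 ∈ cylinder h.choose.1 (k + 1) :=
    (mem_cylinder_iff_eq.1 hxq).subset ((mem_cylinder_comm _ _ _).1 (cylinder_anti _ hk hx))
  rw [extendOfGraph, dif_pos h]
  exact ((hR _ hqR p hp (k + 1)).1 hpq k k.lt_succ_self).symm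

theorem extendOfGraph_fst (hR : IsPartialIsometry R) {p : (ℕ → D) × (ℕ → D)} (hp : p ∈ R) :
    extendOfGraph R p.1 = p.2 :=
  eq_of_forall_mem_cylinder fun n => hR.mapsTo_extendOfGraph hp n (self_mem_cylinder _ n)

section Topology

variable [TopologicalSpace D] [DiscreteTopology D]

theorem forth {B : Set (ℕ → D)} (hB : Dense B) (hP : IsPartialIsometry P) (hPfin : P.Finite)
    (hPB : Prod.snd '' P ⊆ B) (a : ℕ → D) :
    ∃ b ∈ B, IsPartialIsometry (insert (a, b) P) := by
  by_cases haP : a ∈ Prod.fst '' P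
  · obtain ⟨p, hp, rfl⟩ := haP
    exact ⟨p.2, hPB ⟨p, hp, rfl⟩, by rwa [Prod.mk.eta, insert_eq_of_mem hp]⟩
  rcases P.eq_empty_or_nonempty with rfl | hne
  · have : Nonempty (ℕ → D) := ⟨a⟩
    obtain ⟨b, hb⟩ := hB.nonempty
    exact ⟨b, hb, hP.insert_of_forall (by simp)⟩
  obtain ⟨M, _, ⟨p₀, hp₀, rfl⟩, hp₀a, ha⟩ :=
    exists_mem_cylinder_forall_notMem_cylinder_succ (hPfin.image _) (hne.image _) haP
  replace ha : ∀ q ∈ P, q.1 ∉ cylinder a (M + 1) := fun q hq => ha _ ⟨q, hq, rfl⟩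
  obtain ⟨d, hd⟩ := hP.exists_forall_apply_ne hPfin ha
  obtain ⟨b, hbB, hb⟩ := hB.exists_mem_open (isOpen_cylinder _ (update p₀.2 M d) (M + 1))
    ⟨_, self_mem_cylinder _ _⟩
  have hbp₀ : b ∈ cylinder p₀.2 M :=
    (mem_cylinder_iff_eq.1 (update_mem_cylinder _ _ _)).subset (cylinder_anti _ M.le_succ hb)
  have hbM : b M = d := by simpa using (mem_cylinder_succ.1 hb).2
  refine ⟨b, hbB, hP.insert_of_isolated hp₀ hp₀a ((mem_cylinder_comm _ _ _).1 hbp₀) ha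
    fun q hq hqb => ?_⟩
  obtain ⟨hqb, hqM⟩ := mem_cylinder_succ.1 hqb
  have hqp₀ : q.1 ∈ cylinder p₀.1 M :=
    (hP p₀ hp₀ q hq M).2 ((mem_cylinder_iff_eq.1 hbp₀).subset hqb)
  exact hd q hq ((mem_cylinder_iff_eq.1 hp₀a).subset hqp₀) (hqM.trans hbM)

theorem back {A : Set (ℕ → D)} (hA : Dense A) (hP : IsPartialIsometry P) (hPfin : P.Finite)
    (hPA : Prod.fst '' P ⊆ A) (b : ℕ → D) :
    ∃ a ∈ A, IsPartialIsometry (insert (a, b) P) := by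
  obtain ⟨a, ha, h⟩ := hP.image_swap.forth hA (hPfin.image _) (by rwa [image_image]) b
  refine ⟨a, ha, ?_⟩
  simpa [image_insert_eq, image_image] using h.image_swap

theorem leftInverse_extendOfGraph (hR : IsPartialIsometry R) (hdense : Dense (Prod.fst '' R)) :
    LeftInverse (extendOfGraph (Prod.swap '' R)) (extendOfGraph R) := fun x =>
  eq_of_forall_mem_cylinder fun n => by
    obtain ⟨p, hp, hxp⟩ := exists_mem_cylinder_of_dense_image_fst hdense x n
    rw [mem_cylinder_iff_eq.1 hxp]
    exact hR.image_swap.mapsTo_extendOfGraph (mem_image_of_mem _ hp) n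
      (hR.mapsTo_extendOfGraph hp n hxp)

theorem continuous_extendOfGraph (hR : IsPartialIsometry R) (hdense : Dense (Prod.fst '' R)) :
    Continuous (extendOfGraph R) := by
  refine continuous_pi fun n => IsLocallyConstant.continuous <|
    (IsLocallyConstant.iff_exists_open _).2 fun x => ?_
  obtain ⟨p, hp, hxp⟩ := exists_mem_cylinder_of_dense_image_fst hdense x (n + 1)
  refine ⟨_, isOpen_cylinder _ p.1 (n + 1), hxp, fun y hyp => ?_⟩
  exact (hR.mapsTo_extendOfGraph hp _ hyp n n.lt_succ_self).trans
    (hR.mapsTo_extendOfGraph hp _ hxp n n.lt_succ_self).symm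

theorem exists_homeomorph (hR : IsPartialIsometry R) (hfst : Dense (Prod.fst '' R))
    (hsnd : Dense (Prod.snd '' R)) : ∃ h : (ℕ → D) ≃ₜ (ℕ → D), ∀ p ∈ R, h p.1 = p.2 := by
  have hswap : Prod.swap '' (Prod.swap '' R) = R := by simp [image_image]
  have hfst' : Dense (Prod.fst '' (Prod.swap '' R)) := by rwa [image_image]
  have hright : RightInverse (extendOfGraph (Prod.swap '' R)) (extendOfGraph R) := by
    simpa only [hswap, RightInverse] using hR.image_swap.leftInverse_extendOfGraph hfst'
  exact ⟨⟨⟨_, _, hR.leftInverse_extendOfGraph hfst, hright⟩, hR.continuous_extendOfGraph hfst,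
    hR.image_swap.continuous_extendOfGraph hfst'⟩, fun p hp => hR.extendOfGraph_fst hp⟩

end Topology

end IsPartialIsometry

abbrev FinPartialIsometry (A B : Set (ℕ → D)) : Type _ :=
  {S : Set ((ℕ → D) × (ℕ → D)) // S.Finite ∧ IsPartialIsometry S ∧ S ⊆ A ×ˢ B}

section Topology

variable [TopologicalSpace D] [DiscreteTopology D] {A B : Set (ℕ → D)}

theorem isCofinal_mem_image_fst (hB : Dense B) {a : ℕ → D} (ha : a ∈ A) :
    IsCofinal {S : FinPartialIsometry A B | a ∈ Prod.fst '' S.1} := by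
  rintro ⟨S, hSfin, hS, hSAB⟩
  obtain ⟨b, hb, hSb⟩ := hS.forth hB hSfin (fun _ ⟨p, hp, hpb⟩ => hpb ▸ (hSAB hp).2) a
  exact ⟨⟨_, hSfin.insert _, hSb, insert_subset ⟨ha, hb⟩ hSAB⟩, ⟨_, mem_insert _ _, rfl⟩,
    subset_insert _ _⟩

theorem isCofinal_mem_image_snd (hA : Dense A) {b : ℕ → D} (hb : b ∈ B) :
    IsCofinal {S : FinPartialIsometry A B | b ∈ Prod.snd '' S.1} := by
  rintro ⟨S, hSfin, hS, hSAB⟩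
  obtain ⟨a, ha, hSa⟩ := hS.back hA hSfin (fun _ ⟨p, hp, hpa⟩ => hpa ▸ (hSAB hp).1) b
  exact ⟨⟨_, hSfin.insert _, hSa, insert_subset ⟨ha, hb⟩ hSAB⟩, ⟨_, mem_insert _ _, rfl⟩,
    subset_insert _ _⟩

/-- Back and forth, run along the generic ideal given by the Rasiowa–Sikorski lemma. -/
theorem exists_isPartialIsometry_image_fst_image_snd (hAc : A.Countable) (hA : Dense A)
    (hBc : B.Countable) (hB : Dense B) :
    ∃ R : Set ((ℕ → D) × (ℕ → D)),
      IsPartialIsometry R ∧ Prod.fst '' R = A ∧ Prod.snd '' R = B := by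
  have := hAc.to_subtype
  have := hBc.to_subtype
  have : Encodable (A ⊕ B) := Encodable.ofCountable _
  let 𝒟 : A ⊕ B → Order.Cofinal (FinPartialIsometry A B) :=
    Sum.elim (fun a => ⟨_, isCofinal_mem_image_fst hB a.2⟩)
      (fun b => ⟨_, isCofinal_mem_image_snd hA b.2⟩)
  let I := Order.idealOfCofinals ⟨∅, finite_empty, fun _ h => h.elim, empty_subset _⟩ 𝒟
  have hsub (S : FinPartialIsometry A B) : S.1 ⊆ A ×ˢ B := S.2.2.2
  refine ⟨⋃ S ∈ I, S.1, ?_, ?_, ?_⟩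
  · simp only [IsPartialIsometry, mem_iUnion]
    rintro p ⟨S, hS, hpS⟩ q ⟨T, hT, hqT⟩ n
    obtain ⟨U, hU, hSU, hTU⟩ := I.directed S hS T hT
    exact U.2.2.1 p (hSU hpS) q (hTU hqT) n
  · refine Subset.antisymm ?_ fun a ha => ?_
    · simp only [image_subset_iff, iUnion_subset_iff]
      exact fun S _ p hp => (hsub S hp).1
    · obtain ⟨S, ⟨p, hp, rfl⟩, hS⟩ := Order.cofinal_meets_idealOfCofinals _ 𝒟 (.inl ⟨a, ha⟩)
      exact ⟨p, mem_biUnion hS hp, rfl⟩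
  · refine Subset.antisymm ?_ fun b hb => ?_
    · simp only [image_subset_iff, iUnion_subset_iff]
      exact fun S _ p hp => (hsub S hp).2
    · obtain ⟨S, ⟨p, hp, rfl⟩, hS⟩ := Order.cofinal_meets_idealOfCofinals _ 𝒟 (.inr ⟨b, hb⟩)
      exact ⟨p, mem_biUnion hS hp, rfl⟩

end Topology

theorem cdh_pi_nat (D : Type*) [TopologicalSpace D] [DiscreteTopology D] : CDH (ℕ → D) := by
  intro A B hAc hA hBc hB
  obtain ⟨R, hR, rfl, rfl⟩ := exists_isPartialIsometry_image_fst_image_snd hAc hA hBc hB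
  obtain ⟨h, hh⟩ := hR.exists_homeomorph hA hB
  exact ⟨h, by rw [image_image]; exact image_congr hh⟩

end PiNat

/-- The Cantor space and the Baire space are CDH. -/
theorem cantor_and_baire_cdh : CDH (ℕ → Bool) ∧ CDH (ℕ → ℕ) :=
  ⟨PiNat.cdh_pi_nat Bool, PiNat.cdh_pi_nat ℕ⟩
end

section
/- For every natural number n, the Euclidean space ℝⁿ is countable dense homogeneous: for every pair (A,B) of countable dense subsets of ℝⁿ there exists a homeomorphism h of ℝⁿ such that h[A]=B. -/
open Set Filter Metric Topology
open scoped NNReal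

theorem Function.Injective.mapsTo_of_forall_notMem {α : Type*} {τ : α → α}
    (hτ_inj : τ.Injective) {S : Set α} (hτ : ∀ x ∉ S, τ x = x) : MapsTo τ S S := fun x hx => by
  by_contra hτx
  rw [hτ_inj (hτ _ hτx)] at hτx
  exact hτx hx

theorem Equiv.symm_apply_eq_self_of_forall_notMem {α : Type*} (τ : α ≃ α) {S : Set α}
    (hτ : ∀ x ∉ S, τ x = x) : ∀ x ∉ S, τ.symm x = x := fun x hx =>
  τ.symm_apply_eq.2 (hτ x hx).symm

theorem dist_comp_apply_lt_of_forall_notMem {α Y : Type*} [PseudoMetricSpace Y] {τ : α → α}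
    (hτ_inj : τ.Injective) {S : Set α} (hτ : ∀ x ∉ S, τ x = x) (φ : α → Y) {ε : ℝ} (hε : 0 < ε)
    (hφ : ∀ x ∈ S, ∀ y ∈ S, dist (φ x) (φ y) < ε) (x : α) : dist (φ (τ x)) (φ x) < ε := by
  by_cases hx : x ∈ S
  · exact hφ _ (hτ_inj.mapsTo_of_forall_notMem hτ hx) _ hx
  · simpa [hτ x hx] using hε

theorem exists_tendstoUniformly_of_dist_le_geometric_two {ι X : Type*} [PseudoMetricSpace X]
    [CompleteSpace X] {F : ℕ → ι → X} {C : ℝ}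
    (hF : ∀ k x, dist (F k x) (F (k + 1) x) ≤ C / 2 / 2 ^ k) :
    ∃ f : ι → X, TendstoUniformly F f atTop := by
  have hlim x := cauchySeq_tendsto_of_complete (cauchySeq_of_le_geometric_two (hF · x))
  choose f hf using hlim
  refine ⟨f, Metric.tendstoUniformly_iff.2 fun ε hε => ?_⟩
  have hC : Tendsto (fun k : ℕ => C / 2 ^ k) atTop (𝓝 0) :=
    tendsto_const_nhds.div_atTop (tendsto_pow_atTop_atTop_of_one_lt one_lt_two)
  filter_upwards [hC.eventually (gt_mem_nhds hε)] with k hk x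
  rw [dist_comm]
  exact (dist_le_of_le_geometric_two_of_tendsto (hF · x) (hf x) k).trans_lt hk

theorem exists_homeomorph_of_tendstoUniformly {ι X : Type*} [UniformSpace X] [T2Space X]
    {p : Filter ι} [p.NeBot] {H : ι → X ≃ₜ X} {f g : X → X}
    (hf : TendstoUniformly (fun i => ⇑(H i)) f p)
    (hg : TendstoUniformly (fun i => ⇑(H i).symm) g p) :
    ∃ h : X ≃ₜ X, ⇑h = f := by
  have hf_cont : Continuous f := hf.continuous (.of_forall fun i => (H i).continuous)
  have hg_cont : Continuous g := hg.continuous (.of_forall fun i => (H i).symm.continuous)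
  have hgf x : g (f x) = x := tendsto_nhds_unique
    (hg.tendsto_comp hg_cont.continuousAt (hf.tendsto_at x)) (by simp)
  have hfg y : f (g y) = y := tendsto_nhds_unique
    (hf.tendsto_comp hf_cont.continuousAt (hg.tendsto_at y)) (by simp)
  exact ⟨⟨⟨f, g, hgf, hfg⟩, hf_cont, hg_cont⟩, rfl⟩

theorem eqOn_of_tendsto_of_eqOn_succ {α X : Type*} [TopologicalSpace X] [T2Space X]
    {F : ℕ → Set α} (hF : Monotone F) {H : ℕ → α → X} (hH : ∀ k, EqOn (H (k + 1)) (H k) (F k))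
    {f : α → X} (hf : ∀ x, Tendsto (H · x) atTop (𝓝 (f x))) (k : ℕ) : EqOn f (H k) (F k) := by
  intro x hx
  refine tendsto_nhds_unique (hf x) (tendsto_const_nhds.congr' ?_)
  filter_upwards [eventually_ge_atTop k] with j hj
  induction j, hj using Nat.le_induction with
  | base => rfl
  | succ j hkj ih => rw [ih, hH j (hF hkj hx)]

section NormedSpace
variable {E : Type*} [NormedAddCommGroup E] [NormedSpace ℝ E] [CompleteSpace E]

theorem exists_homeomorph_apply_eq_of_mem_ball {p q : E} {r : ℝ} (hq : q ∈ ball p r) :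
    ∃ τ : E ≃ₜ E, τ p = q ∧ ∀ x ∉ ball p r, τ x = x := by
  have hr : 0 < r := pos_of_mem_ball hq
  set s : E → ℝ := fun x => max (1 - dist x p / r) 0
  have hs : ∀ x y, |s x - s y| ≤ dist x y / r := fun x y => by
    refine (abs_max_sub_max_le_abs _ _ _).trans ?_
    rw [sub_sub_sub_cancel_left, ← sub_div, abs_div, abs_of_pos hr]
    gcongr
    exact abs_sub_comm (dist x p) _ ▸ abs_dist_sub_le x y p
  set c : ℝ≥0 := Real.toNNReal (dist q p / r)
  have hc : c < 1 := by
    simpa [c, div_lt_one hr] using mem_ball.1 hq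
  have hg : LipschitzWith c fun x => s x • (q - p) := by
    refine LipschitzWith.of_dist_le_mul fun x y => ?_
    rw [dist_eq_norm, ← sub_smul, norm_smul, Real.norm_eq_abs, ← dist_eq_norm,
      Real.coe_toNNReal _ (by positivity), div_mul_comm]
    gcongr
    exact hs x y
  have happrox : ApproximatesLinearOn (fun x => x + s x • (q - p))
      (ContinuousLinearEquiv.refl ℝ E : E →L[ℝ] E) univ c := by
    rw [ApproximatesLinearOn.approximatesLinearOn_iff_lipschitzOnWith]
    convert hg.lipschitzOnWith (s := univ) using 2 with x
    simp
  have hN : Subsingleton E ∨ c < ‖((ContinuousLinearEquiv.refl ℝ E).symm : E →L[ℝ] E)‖₊⁻¹ := by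
    rcases subsingleton_or_nontrivial E with hE | hE
    · exact .inl hE
    · right
      simpa using hc
  refine ⟨happrox.toHomeomorph _ hN, ?_, fun x hx => ?_⟩
  · show p + s p • (q - p) = q
    simp [s]
  · show x + s x • (q - p) = x
    have : s x = 0 := max_eq_right <| by
      rw [sub_nonpos, one_le_div hr]
      simpa using hx
    simp [this]

end NormedSpace

def BallHomogeneous (X : Type*) [PseudoMetricSpace X] : Prop :=
  ∀ (p q : X) (r : ℝ), q ∈ ball p r → ∃ τ : X ≃ₜ X, τ p = q ∧ ∀ x ∉ ball p r, τ x = x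

def IsPartialMatch {X : Type*} (A B : Set X) (h : X → X) (F : Set X) : Prop :=
  F.Finite ∧ F ⊆ A ∧ MapsTo h F B

namespace BallHomogeneous

variable {X : Type*} [MetricSpace X] {A B F : Set X} {ε : ℝ}

theorem exists_forth (hX : BallHomogeneous X) (hB : Dense B) {h : X ≃ₜ X} (hF : F.Finite)
    (hFB : MapsTo h F B) (a : X) (hε : 0 < ε) :
    ∃ h' : X ≃ₜ X, h' a ∈ B ∧ EqOn h' h F ∧ (∀ x, dist (h x) (h' x) < ε) ∧
      ∀ y, dist (h.symm y) (h'.symm y) < ε := by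
  by_cases ha : a ∈ F
  · exact ⟨h, hFB ha, eqOn_refl _ _, by simpa using fun _ => hε, by simpa using fun _ => hε⟩
  have hU : ((h '' F)ᶜ ∩ h.symm ⁻¹' ball a (ε / 2)) ∩ ball (h a) (ε / 2) ∈ 𝓝 (h a) := by
    refine inter_mem (inter_mem ((hF.image h).isClosed.compl_mem_nhds ?_)
      (h.symm.continuous.continuousAt.preimage_mem_nhds ?_)) (ball_mem_nhds _ (half_pos hε))
    · rwa [h.injective.mem_set_image]
    · simpa using ball_mem_nhds a (half_pos hε)
  -- The ball around `h a` misses `h '' F` and `h⁻¹` maps it into `ball a (ε / 2)`, so a bump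
  -- supported in it moves both `h` and `h⁻¹` by less than `ε`.
  obtain ⟨r, hr, hrU⟩ := Metric.mem_nhds_iff.1 hU
  obtain ⟨b, hb, hbB⟩ := hB.inter_open_nonempty _ isOpen_ball (nonempty_ball.2 hr)
  obtain ⟨τ, hτa, hτ⟩ := hX (h a) b r hb
  have hball_lt {c y z : X} (hy : y ∈ ball c (ε / 2)) (hz : z ∈ ball c (ε / 2)) : dist y z < ε :=
    (dist_triangle_right y z c).trans_lt (by linarith [mem_ball.1 hy, mem_ball.1 hz])
  refine ⟨h.trans τ, by simpa [hτa] using hbB,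
    fun x hx => hτ _ fun hxr => (hrU hxr).1.1 (mem_image_of_mem h hx), fun x => ?_, fun y => ?_⟩
  · rw [dist_comm]
    exact dist_comp_apply_lt_of_forall_notMem τ.injective hτ id hε
      (fun y hy z hz => hball_lt (hrU hy).2 (hrU hz).2) (h x)
  · rw [dist_comm]
    exact dist_comp_apply_lt_of_forall_notMem τ.symm.injective
      (τ.toEquiv.symm_apply_eq_self_of_forall_notMem hτ) h.symm hε
      (fun y hy z hz => hball_lt (hrU hy).1.2 (hrU hz).1.2) y

theorem exists_back (hX : BallHomogeneous X) (hA : Dense A) {h : X ≃ₜ X} (hF : F.Finite)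
    (hFA : F ⊆ A) (b : X) (hε : 0 < ε) :
    ∃ h' : X ≃ₜ X, h'.symm b ∈ A ∧ EqOn h' h F ∧ (∀ x, dist (h x) (h' x) < ε) ∧
      ∀ y, dist (h.symm y) (h'.symm y) < ε := by
  have hFA' : MapsTo h.symm (h '' F) A := by
    rintro _ ⟨x, hx, rfl⟩
    simpa using hFA hx
  obtain ⟨k, hkb, hk, hdist, hdist_symm⟩ := hX.exists_forth hA (hF.image h) hFA' b hε
  refine ⟨k.symm, hkb, fun x hx => ?_, by simpa using hdist_symm, by simpa using hdist⟩
  rw [k.symm_apply_eq, hk (mem_image_of_mem h hx), h.symm_apply_apply]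

theorem exists_step (hX : BallHomogeneous X) (hA : Dense A) (hB : Dense B) {h : X ≃ₜ X}
    (hh : IsPartialMatch A B h F) {a b : X} (ha : a ∈ A) (hb : b ∈ B) (hε : 0 < ε) :
    ∃ (h' : X ≃ₜ X) (F' : Set X), IsPartialMatch A B h' F' ∧ F ⊆ F' ∧ EqOn h' h F ∧
      a ∈ F' ∧ b ∈ h' '' F' ∧ (∀ x, dist (h x) (h' x) < ε) ∧
      ∀ y, dist (h.symm y) (h'.symm y) < ε := by
  obtain ⟨hF, hFA, hFB⟩ := hh
  obtain ⟨h₁, h₁a, h₁F, hd₁, hd₁'⟩ := hX.exists_forth hB hF hFB a (half_pos hε)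
  have hF₁ : (insert a F).Finite := hF.insert a
  have hF₁B : MapsTo h₁ (insert a F) B := by
    rintro x (rfl | hx)
    exacts [h₁a, h₁F hx ▸ hFB hx]
  obtain ⟨h₂, h₂b, h₂F, hd₂, hd₂'⟩ :=
    hX.exists_back hA hF₁ (insert_subset ha hFA) b (half_pos hε)
  refine ⟨h₂, insert (h₂.symm b) (insert a F),
    ⟨hF₁.insert _, insert_subset h₂b (insert_subset ha hFA), ?_⟩,
    (subset_insert _ _).trans (subset_insert _ _),
    fun x hx => (h₂F (mem_insert_of_mem _ hx)).trans (h₁F hx),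
    mem_insert_of_mem _ (mem_insert _ _), ⟨_, mem_insert _ _, h₂.apply_symm_apply b⟩,
    fun x => ?_, fun y => ?_⟩
  · rintro x (rfl | hx)
    · simpa using hb
    · exact h₂F hx ▸ hF₁B hx
  · linarith [dist_triangle (h x) (h₁ x) (h₂ x), hd₁ x, hd₂ x]
  · linarith [dist_triangle (h.symm y) (h₁.symm y) (h₂.symm y), hd₁' y, hd₂' y]

theorem exists_seq (hX : BallHomogeneous X) (hA : Dense A) (hB : Dense B) {a b : ℕ → X}
    (ha : ∀ k, a k ∈ A) (hb : ∀ k, b k ∈ B) :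
    ∃ (H : ℕ → X ≃ₜ X) (F : ℕ → Set X), (∀ k, IsPartialMatch A B (H k) (F k)) ∧ Monotone F ∧
      (∀ k, EqOn (H (k + 1)) (H k) (F k)) ∧
      (∀ k, a k ∈ F (k + 1) ∧ b k ∈ H (k + 1) '' F (k + 1)) ∧
      (∀ k x, dist (H k x) (H (k + 1) x) ≤ 1 / 2 / 2 ^ k) ∧
      ∀ k y, dist ((H k).symm y) ((H (k + 1)).symm y) ≤ 1 / 2 / 2 ^ k := by
  have step (k : ℕ) (h : X ≃ₜ X) (F : Set X) (hh : IsPartialMatch A B h F) :=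
    hX.exists_step hA hB hh (ha k) (hb k) (by positivity : (0 : ℝ) < 1 / 2 / 2 ^ k)
  choose! next nextSet hmatch hsub heq hak hbk hdist hdist_symm using step
  let S (k : ℕ) : (X ≃ₜ X) × Set X :=
    Nat.rec (Homeomorph.refl X, ∅) (fun k s => (next k s.1 s.2, nextSet k s.1 s.2)) k
  have hS (k : ℕ) : IsPartialMatch A B (S k).1 (S k).2 := by
    induction k with
    | zero => exact ⟨finite_empty, empty_subset _, mapsTo_empty _ _⟩
    | succ k ih => exact hmatch k _ _ ih
  exact ⟨fun k => (S k).1, fun k => (S k).2, hS,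
    monotone_nat_of_le_succ fun k => hsub k _ _ (hS k), fun k => heq k _ _ (hS k),
    fun k => ⟨hak k _ _ (hS k), hbk k _ _ (hS k)⟩,
    fun k x => (hdist k _ _ (hS k) x).le, fun k y => (hdist_symm k _ _ (hS k) y).le⟩

theorem cdh [CompleteSpace X] (hX : BallHomogeneous X) : CDH X := by
  intro A B hAc hA hBc hB
  rcases isEmpty_or_nonempty X with hX₀ | hX₀
  · exact ⟨Homeomorph.refl X, Subsingleton.elim _ _⟩
  obtain ⟨a, rfl⟩ := hAc.exists_eq_range hA.nonempty
  obtain ⟨b, rfl⟩ := hBc.exists_eq_range hB.nonempty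
  obtain ⟨H, F, hmatch, hF, heq, hab, hdist, hdist_symm⟩ :=
    hX.exists_seq hA hB (mem_range_self ·) (mem_range_self ·)
  obtain ⟨f, hf⟩ := exists_tendstoUniformly_of_dist_le_geometric_two hdist
  obtain ⟨g, hg⟩ := exists_tendstoUniformly_of_dist_le_geometric_two hdist_symm
  obtain ⟨h, rfl⟩ := exists_homeomorph_of_tendstoUniformly hf hg
  have hlim (k : ℕ) : EqOn h (H k) (F k) := eqOn_of_tendsto_of_eqOn_succ hF heq hf.tendsto_at k
  refine ⟨h, subset_antisymm ?_ ?_⟩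
  · rintro _ ⟨_, ⟨k, rfl⟩, rfl⟩
    exact hlim (k + 1) (hab k).1 ▸ (hmatch (k + 1)).2.2 (hab k).1
  · rintro _ ⟨k, rfl⟩
    obtain ⟨x, hx, hxb⟩ := (hab k).2
    exact ⟨x, (hmatch (k + 1)).2.1 hx, (hlim (k + 1) hx).trans hxb⟩

end BallHomogeneous

/-- Euclidean space `ℝⁿ` is CDH for every `n`. -/
theorem euclidean_cdh (n : ℕ) : CDH (EuclideanSpace ℝ (Fin n)) :=
  BallHomogeneous.cdh fun _ _ _ => exists_homeomorph_apply_eq_of_mem_ball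
end
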